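/- arXiv:1812.04566 — 8 statements merged into one kernel-verified Lean document; each statement's English description precedes it below -/
import Mathlib

section
/- Let t be a prime number and q an integer greater than 1. If q^t − 1 divides (q − 1)^k for some positive integer k, then t = 2. -/
/-!
Write `q ^ t - 1 = (q - 1) * S` with `S = 1 + q + ⋯ + q ^ (t - 1)`. Every prime `p ∣ S` divides
`q - 1`, so `S ≡ t [MOD p]` and `p = t`; hence `S` is a power of `t` and `t ∣ q - 1`. For odd `t`
this congruence lifts to `S ≡ t [MOD t ^ 2]`, so `S = t`, contradicting `S > t`.
-/

open Finset

namespace Nat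

theorem geom_sum_modEq_of_modEq_one {q m : ℕ} (h : q ≡ 1 [MOD m]) (n : ℕ) :
    ∑ i ∈ range n, q ^ i ≡ n [MOD m] := by
  simpa using ModEq.sum (s := range n) fun i _ => h.pow i

theorem geom_sum_modEq_sq_of_modEq_one {q p : ℕ} (hp : Odd p) (h : q ≡ 1 [MOD p]) :
    ∑ i ∈ range p, q ^ i ≡ p [MOD p ^ 2] := by
  obtain ⟨b, hb⟩ : (p : ℤ) ∣ q - 1 := modEq_iff_dvd.mp h.symm
  have := odd_sq_dvd_geom_sum₂_sub (1 : ℤ) b hp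
  rw [show 1 + (p : ℤ) * b = q by linarith] at this
  rw [modEq_iff_dvd, ← dvd_neg]
  push_cast
  simpa using this

theorem dvd_of_forall_prime_dvd_eq_of_not_sq_dvd {n p : ℕ} (hn : n ≠ 0)
    (h : ∀ {d}, d.Prime → d ∣ n → d = p) (hsq : ¬p ^ 2 ∣ n) : n ∣ p := by
  rw [eq_prime_pow_of_unique_prime_dvd hn h] at hsq ⊢
  simpa using pow_dvd_pow p (show _ ≤ 1 by by_contra! h; exact hsq (pow_dvd_pow p h))

theorem lt_geom_sum {q n : ℕ} (hq : 1 < q) (hn : 1 < n) : n < ∑ i ∈ range n, q ^ i :=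
  calc n = ∑ i ∈ range n, 1 := by simp
    _ < ∑ i ∈ range n, q ^ i :=
      sum_lt_sum (fun i _ => one_le_pow _ _ (by omega)) ⟨1, mem_range.mpr hn, by simpa⟩

end Nat

theorem prime_eq_two_of_pow_sub_one_dvd_general
    (t q k : ℕ) (ht : t.Prime) (hq : 1 < q)
    (hdvd : (q ^ t - 1) ∣ (q - 1) ^ k) : t = 2 := by
  by_contra ht2
  set S := ∑ i ∈ range t, q ^ i
  have hS_dvd : S ∣ (q - 1) ^ k := (Dvd.intro _ (geom_sum_mul_of_one_le hq.le t)).trans hdvd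
  have hmodEq {p : ℕ} (hp : p.Prime) (hpS : p ∣ S) : q ≡ 1 [MOD p] :=
    ((Nat.modEq_iff_dvd' hq.le).mpr (hp.dvd_of_dvd_pow (hpS.trans hS_dvd))).symm
  have hfactor {p : ℕ} (hp : p.Prime) (hpS : p ∣ S) : p = t :=
    (Nat.prime_dvd_prime_iff_eq hp ht).mp
      (((Nat.geom_sum_modEq_of_modEq_one (hmodEq hp hpS) t).dvd_iff dvd_rfl).mp hpS)
  have htS : t < S := Nat.lt_geom_sum hq ht.one_lt
  have ht_two_le := ht.two_le
  obtain ⟨p, hp, hpS⟩ := Nat.exists_prime_and_dvd (show S ≠ 1 by omega)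
  have hq_modEq : q ≡ 1 [MOD t] := hmodEq ht (hfactor hp hpS ▸ hpS)
  have hsq : ¬t ^ 2 ∣ S := fun h => by
    have : t ^ 2 ∣ t ^ 1 := by
      simpa using ((Nat.geom_sum_modEq_sq_of_modEq_one (ht.odd_of_ne_two ht2) hq_modEq).dvd_iff
        dvd_rfl).mp h
    exact absurd ((Nat.pow_dvd_pow_iff_le_right ht.one_lt).mp this) (by norm_num)
  have hS_dvd_t : S ∣ t := Nat.dvd_of_forall_prime_dvd_eq_of_not_sq_dvd (by omega) hfactor hsq
  exact absurd (Nat.le_of_dvd ht.pos hS_dvd_t) (by omega)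

/-- Let `t` be a prime and `q > 1` an integer. If `q ^ t - 1` divides
`(q - 1) ^ k` for some positive integer `k`, then `t = 2`. -/
theorem prime_eq_two_of_pow_sub_one_dvd
    (t q k : ℕ) (ht : t.Prime) (hq : 1 < q) (hk : 0 < k)
    (hdvd : (q ^ t - 1) ∣ (q - 1) ^ k) : t = 2 :=
  prime_eq_two_of_pow_sub_one_dvd_general t q k ht hq hdvd
end

section
/- If N is a non-trivial proper normal subgroup of a finite group G, then diam(G) ≤ 4 · diam(N) · diam(G/N). -/
/-- For a group `G`, `diamLe G L` says that for every generating set `S` of `G`, every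
element of `G` is a product of at most `L` elements of `S ∪ S⁻¹`. -/
def diamLe (G : Type*) [Group G] (L : ℕ) : Prop :=
  ∀ S : Set G, Subgroup.closure S = ⊤ →
    ∀ g : G, ∃ l : List G,
      (∀ x ∈ l, x ∈ S ∨ x⁻¹ ∈ S) ∧ l.length ≤ L ∧ l.prod = g

/-- The diameter `diam G` of a group `G`: the maximum over all generating sets `S` of the
least `L` such that every element of `G` is a product of at most `L` elements of
`S ∪ S⁻¹`, i.e. the least `L` such that `diamLe G L` holds. -/
noncomputable def diam (G : Type*) [Group G] : ℕ :=
  sInf {L | diamLe G L}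

/-!
Fix a generating set `S` of `G`. Lifting short words of `G ⧸ N` gives a transversal `R` of `N`
containing `1` whose elements have length at most `diam (G ⧸ N)`. By Schreier's lemma the
elements `r s (r s)‾⁻¹` (`r ∈ R`, `s ∈ S`, `‾` the representative in `R`) generate `N`, and each
has length at most `2 diam (G ⧸ N) + 1`; hence every element of `N` has length at most
`diam N * (2 diam (G ⧸ N) + 1)`. Writing `g = (g g‾⁻¹) g‾` gives
`diam G ≤ diam N * (2 diam (G ⧸ N) + 1) + diam (G ⧸ N) ≤ 4 diam N diam (G ⧸ N)`, the last step
because both diameters are positive for non-trivial groups.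
-/

open Subgroup Set

def IsWord {G : Type*} [Group G] (S : Set G) (L : ℕ) (g : G) : Prop :=
  ∃ l : List G, (∀ x ∈ l, x ∈ S ∨ x⁻¹ ∈ S) ∧ l.length ≤ L ∧ l.prod = g

namespace IsWord

variable {G : Type*} [Group G] {S : Set G} {L L' : ℕ} {g h : G}

theorem one (L : ℕ) : IsWord S L (1 : G) := ⟨[], by simp, by simp, by simp⟩

theorem of_mem (hg : g ∈ S) : IsWord S 1 g := ⟨[g], by simp [hg], by simp, by simp⟩

theorem mono (hg : IsWord S L g) (hLL' : L ≤ L') : IsWord S L' g :=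
  let ⟨l, hl, hlen, hprod⟩ := hg
  ⟨l, hl, hlen.trans hLL', hprod⟩

theorem mul (hg : IsWord S L g) (hh : IsWord S L' h) : IsWord S (L + L') (g * h) := by
  obtain ⟨l, hl, hlen, rfl⟩ := hg
  obtain ⟨m, hm, hmlen, rfl⟩ := hh
  refine ⟨l ++ m, fun x hx => ?_, by simpa using Nat.add_le_add hlen hmlen, by simp⟩
  exact (List.mem_append.mp hx).elim (hl x) (hm x)

theorem inv (hg : IsWord S L g) : IsWord S L g⁻¹ := by
  obtain ⟨l, hl, hlen, rfl⟩ := hg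
  refine ⟨(l.map (·⁻¹)).reverse, ?_, by simpa using hlen, by rw [List.prod_inv_reverse]⟩
  simp only [List.mem_reverse, List.mem_map]
  rintro - ⟨y, hy, rfl⟩
  simpa [or_comm] using hl y hy

theorem exists_of_mem_closure (hg : g ∈ closure S) : ∃ L, IsWord S L g := by
  induction hg using closure_induction with
  | mem x hx => exact ⟨1, of_mem hx⟩
  | one => exact ⟨0, one 0⟩
  | mul x y _ _ hx hy =>
    obtain ⟨L, hx⟩ := hx
    obtain ⟨L', hy⟩ := hy
    exact ⟨L + L', hx.mul hy⟩
  | inv x _ hx => exact hx.imp fun _ => inv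

theorem list_prod {c : ℕ} {l : List G} (h : ∀ x ∈ l, IsWord S c x) :
    IsWord S (l.length * c) l.prod := by
  induction l with
  | nil => simpa using one 0
  | cons x l ih =>
    simpa [Nat.succ_mul, Nat.add_comm] using
      (h x List.mem_cons_self).mul (ih fun y hy => h y (List.mem_cons_of_mem _ hy))

theorem subst {H : Type*} [Group H] {T : Set H} {c : ℕ} {h : H} (f : H →* G)
    (hT : ∀ t ∈ T, IsWord S c (f t)) (hh : IsWord T L h) : IsWord S (L * c) (f h) := by
  obtain ⟨l, hl, hlen, rfl⟩ := hh
  have hletters : ∀ x ∈ l.map f, IsWord S c x := by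
    simp only [List.mem_map]
    rintro - ⟨t, ht, rfl⟩
    rcases hl t ht with ht | ht
    · exact hT t ht
    · simpa using (hT _ ht).inv
  simpa [map_list_prod] using (list_prod hletters).mono (Nat.mul_le_mul_right c (by simpa))

theorem exists_lift {H : Type*} [Group H] (π : G →* H) {q : H} (hq : IsWord (π '' S) L q) :
    ∃ g, IsWord S L g ∧ π g = q := by
  obtain ⟨l, hl, hlen, rfl⟩ := hq
  suffices ∃ g, IsWord S l.length g ∧ π g = l.prod from this.imp fun _ h => ⟨h.1.mono hlen, h.2⟩
  clear hlen
  induction l with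
  | nil => exact ⟨1, one 0, by simp⟩
  | cons x l ih =>
    obtain ⟨g, hg, hgl⟩ := ih fun y hy => hl y (List.mem_cons_of_mem _ hy)
    obtain ⟨s, hs, rfl⟩ : ∃ s, IsWord S 1 s ∧ π s = x := by
      rcases hl x List.mem_cons_self with ⟨s, hs, rfl⟩ | ⟨s, hs, hsx⟩
      · exact ⟨s, of_mem hs, rfl⟩
      · exact ⟨s⁻¹, (of_mem hs).inv, by simp [hsx]⟩
    exact ⟨s * g, by simpa [Nat.add_comm] using hs.mul hg, by simp [hgl]⟩

end IsWord

section Diameter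

variable {G : Type*} [Group G]

theorem diamLe_mono {L L' : ℕ} (h : diamLe G L) (hLL' : L ≤ L') : diamLe G L' :=
  fun S hS g => IsWord.mono (h S hS g) hLL'

theorem exists_diamLe [Finite G] : ∃ L, diamLe G L := by
  have hbound : ∀ p : Set G × G, ∃ L, closure p.1 = ⊤ → IsWord p.1 L p.2 := by
    rintro ⟨S, g⟩
    by_cases hS : closure S = ⊤
    · exact (IsWord.exists_of_mem_closure (hS ▸ mem_top g)).imp fun _ h _ => h
    · exact ⟨0, fun h => absurd h hS⟩
  choose F hF using hbound
  obtain ⟨L, hL⟩ := (finite_range F).bddAbove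
  exact ⟨L, fun S hS g => (hF (S, g) hS).mono (hL ⟨(S, g), rfl⟩)⟩

theorem diamLe_diam [Finite G] : diamLe G (diam G) :=
  Nat.sInf_mem exists_diamLe

theorem not_diamLe_zero [Nontrivial G] : ¬ diamLe G 0 := by
  intro h
  obtain ⟨g, hg⟩ := exists_ne (1 : G)
  obtain ⟨l, -, hlen, rfl⟩ := h univ closure_univ g
  rw [Nat.le_zero, List.length_eq_zero_iff] at hlen
  exact hg (by simp [hlen])

theorem diam_pos [Finite G] [Nontrivial G] : 0 < diam G :=
  Nat.pos_of_ne_zero fun h => not_diamLe_zero (h ▸ diamLe_diam)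

end Diameter

section Normal

variable {G : Type*} [Group G] {N : Subgroup G} [N.Normal]

theorem isComplement_range_of_normal {f : G ⧸ N → G} (hf : ∀ q, (f q : G ⧸ N) = q) :
    IsComplement (N : Set G) (range f) := by
  rw [isComplement_iff_existsUnique_mul_inv_mem]
  intro g
  refine ⟨⟨f g, g, rfl⟩, ?_, ?_⟩
  · simp [← QuotientGroup.eq_one_iff, hf]
  · rintro ⟨-, q, rfl⟩ hq
    rw [SetLike.mem_coe, ← QuotientGroup.eq_one_iff, QuotientGroup.mk_mul, QuotientGroup.mk_inv,
      hf, mul_inv_eq_one] at hq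
    simp [hq]

theorem exists_isComplement_forall_isWord {L : ℕ} (hL : diamLe (G ⧸ N) L) {S : Set G}
    (hS : closure S = ⊤) : ∃ R : Set G, IsComplement (N : Set G) R ∧ (1 : G) ∈ R ∧
      ∀ r ∈ R, IsWord S L r := by
  have hS' : closure (QuotientGroup.mk' N '' S) = ⊤ := by
    rw [← MonoidHom.map_closure, hS, map_top_of_surjective _ (QuotientGroup.mk'_surjective N)]
  have hlift : ∀ q : G ⧸ N, ∃ r, IsWord S L r ∧ (r : G ⧸ N) = q ∧ (q = 1 → r = 1) := by
    intro q
    by_cases hq : q = 1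
    · exact ⟨1, IsWord.one L, hq ▸ rfl, fun _ => rfl⟩
    · obtain ⟨r, hr, hrq⟩ := IsWord.exists_lift (QuotientGroup.mk' N) (hL _ hS' q)
      exact ⟨r, hr, hrq, fun h => absurd h hq⟩
  choose f hfS hf hf1 using hlift
  exact ⟨range f, isComplement_range_of_normal hf, ⟨1, hf1 1 rfl⟩, by
    rintro - ⟨q, rfl⟩; exact hfS q⟩

theorem diamLe_of_diamLe_normal {L₁ L₂ : ℕ} (h₁ : diamLe N L₁) (h₂ : diamLe (G ⧸ N) L₂) :
    diamLe G (L₁ * (2 * L₂ + 1) + L₂) := by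
  intro S hS g
  obtain ⟨R, hR, hR1, hRS⟩ := exists_isComplement_forall_isWord h₂ hS
  have hrep : ∀ x, IsWord S L₂ (hR.toRightFun x : G) := fun x => hRS _ (hR.toRightFun x).2
  have hN : IsWord S (L₁ * (2 * L₂ + 1)) (g * (hR.toRightFun g : G)⁻¹) := by
    refine IsWord.subst N.subtype ?_
      (h₁ _ (closure_mul_image_eq_top hR hR1 hS) ⟨_, hR.mul_inv_toRightFun_mem g⟩)
    rintro - ⟨-, ⟨r, hr, s, hs, rfl⟩, rfl⟩
    exact (((hRS r hr).mul (.of_mem hs)).mul (hrep _).inv).mono (by omega)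
  rw [← inv_mul_cancel_right g (hR.toRightFun g : G)]
  exact hN.mul (hrep g)

end Normal

/-- **Babai–Seress.** If `N` is a non-trivial proper normal subgroup of a
finite group `G`, then `diam G ≤ 4 * diam N * diam (G / N)`. -/
theorem diam_le_of_normal
    (G : Type*) [Group G] [Finite G]
    (N : Subgroup G) [N.Normal] (hbot : N ≠ ⊥) (htop : N ≠ ⊤) :
    diam G ≤ 4 * diam N * diam (G ⧸ N) := by
  have : Nontrivial N := N.nontrivial_iff_ne_bot.mpr hbot
  have : Nontrivial (G ⧸ N) := QuotientGroup.nontrivial_iff.mpr htop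
  have h₁ : 0 < diam N := diam_pos
  have h₂ : 0 < diam (G ⧸ N) := diam_pos
  refine Nat.sInf_le (diamLe_mono (diamLe_of_diamLe_normal (diamLe_diam (G := N)) diamLe_diam) ?_)
  nlinarith
end

section
/- There exists an absolute constant c > 0 such that for every prime p, every power q of p, every integer n ≥ 1, and every p-subgroup P of GL(n, F_q), one has diam(P) ≤ q^(c·n). -/
/-!
A `p`-subgroup `P` of `GL(n, F_q)` stabilises the series `0 = W₀ ≤ W₁ ≤ ⋯` of iterated fixed
spaces, which reaches `F_qⁿ` after `n` steps because a `p`-group acting on a nonzero `p`-group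
fixes a nonzero point. The elements moving every `W_j` into `W_{j-d}` form subgroups `P_d` with
`⁅P_a, P_b⁆ ≤ P_{a+b}` and `P_n = 1`, so the derived length of `P` is at most `d = log₂ n + 1`;
`(g - 1)ⁿ = 0` bounds the exponent `E` of `P` by `p n`; and `|P| ≤ q^{n²} ≤ 2^k` for `k = q n²`.
In a finite group of order at most `2^k`, every generating set of a subgroup contains `k`
elements that generate it. Hence, going down the derived series, each abelian quotient of exponent
`E` has coset representatives of length `kE` times that of the generators, Schreier's lemma gives
short generators of the next term, and word length grows by a factor `2kE + 1` per step:
`diam P ≤ d kE (2kE + 1)^d = q^{O(n)}`.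
-/

open Subgroup
open scoped commutatorElement

section WordLength

variable {G : Type*} [Group G]

def WordLengthLE (S : Set G) (r : ℕ) (g : G) : Prop :=
  ∃ l : List G, (∀ x ∈ l, x ∈ S ∨ x⁻¹ ∈ S) ∧ l.length ≤ r ∧ l.prod = g

variable {S : Set G} {r r' : ℕ} {g h : G}

theorem WordLengthLE.mono (hg : WordLengthLE S r g) (hr : r ≤ r') : WordLengthLE S r' g :=
  let ⟨l, hlS, hlr, hl⟩ := hg
  ⟨l, hlS, hlr.trans hr, hl⟩

theorem wordLengthLE_one (S : Set G) (r : ℕ) : WordLengthLE S r 1 :=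
  ⟨[], by simp, by simp, rfl⟩

theorem wordLengthLE_one_of_mem (hg : g ∈ S) : WordLengthLE S 1 g :=
  ⟨[g], by simp [hg], by simp, by simp⟩

theorem WordLengthLE.mul (hg : WordLengthLE S r g) (hh : WordLengthLE S r' h) :
    WordLengthLE S (r + r') (g * h) := by
  obtain ⟨l, hlS, hlr, rfl⟩ := hg
  obtain ⟨l', hlS', hlr', rfl⟩ := hh
  refine ⟨l ++ l', ?_, by simp only [List.length_append]; omega, List.prod_append⟩
  simp only [List.mem_append]
  rintro x (hx | hx)
  exacts [hlS x hx, hlS' x hx]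

theorem WordLengthLE.inv (hg : WordLengthLE S r g) : WordLengthLE S r g⁻¹ := by
  obtain ⟨l, hlS, hlr, rfl⟩ := hg
  refine ⟨(l.map (·⁻¹)).reverse, ?_, by simpa using hlr, (List.prod_inv_reverse l).symm⟩
  simp only [List.mem_reverse, List.mem_map]
  rintro _ ⟨y, hy, rfl⟩
  simpa [or_comm] using hlS y hy

theorem WordLengthLE.pow (hg : WordLengthLE S r g) (m : ℕ) : WordLengthLE S (m * r) (g ^ m) := by
  induction m with
  | zero => simpa using wordLengthLE_one S 0
  | succ m ih => simpa [pow_succ, Nat.succ_mul] using ih.mul hg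

theorem diam_le_of_diamLe {L : ℕ} (h : diamLe G L) : diam G ≤ L :=
  Nat.sInf_le h

end WordLength

section Greedy

variable {G : Type*} [Group G] [Finite G]

theorem Subgroup.two_mul_card_le_card_of_lt {H K : Subgroup G} (hHK : H < K) :
    2 * Nat.card H ≤ Nat.card K := by
  obtain ⟨m, hm⟩ := card_dvd_of_le hHK.le
  have hm0 : m ≠ 0 := by rintro rfl; exact Nat.card_pos.ne' hm
  have hm1 : m ≠ 1 := by
    rintro rfl
    exact hHK.ne (eq_of_le_of_card_ge hHK.le (by rw [hm, mul_one]))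
  rw [hm, mul_comm]
  exact Nat.mul_le_mul_left _ (by omega : 2 ≤ m)

/-- Greedy choice: each new element of `T` outside the current subgroup at least doubles it. -/
theorem exists_list_closure_le_sup (T : Set G) (k : ℕ) (B : Subgroup G)
    (hB : Nat.card G ≤ 2 ^ k * Nat.card B) :
    ∃ ts : List G, (∀ t ∈ ts, t ∈ T) ∧ ts.length ≤ k ∧ closure T ≤ closure {t | t ∈ ts} ⊔ B := by
  induction k generalizing B with
  | zero =>
    have hB : B = ⊤ := eq_top_of_le_card B (by simpa using hB)
    exact ⟨[], by simp, le_rfl, by simp [hB]⟩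
  | succ k ih =>
    by_cases hTB : T ⊆ B
    · exact ⟨[], by simp, by simp, by simpa using hTB⟩
    obtain ⟨t, htT, htB⟩ := Set.not_subset.1 hTB
    have hlt : B < closure {t} ⊔ B :=
      lt_of_le_of_ne le_sup_right fun h ↦ htB (h ▸ mem_sup_left (mem_closure_singleton_self t))
    obtain ⟨ts, htsT, hlen, hle⟩ := ih (closure {t} ⊔ B) <| by
      calc Nat.card G ≤ 2 ^ k * (2 * Nat.card B) := by rw [← mul_assoc, ← pow_succ]; exact hB
        _ ≤ 2 ^ k * Nat.card ↥(closure {t} ⊔ B) :=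
          Nat.mul_le_mul_left _ (two_mul_card_le_card_of_lt hlt)
    refine ⟨t :: ts, by simpa [htT] using htsT, by simpa using hlen, hle.trans ?_⟩
    have hcons : {x | x ∈ t :: ts} = insert t {x | x ∈ ts} := by ext; simp
    rw [hcons, Set.insert_eq, Subgroup.closure_union, sup_left_comm, sup_assoc]

end Greedy

section Transversal

variable {G : Type*} [Group G] {S : Set G} {H N : Subgroup G} [N.Normal] {E ℓ : ℕ}

theorem exists_pow_lt_inv_mul_mem_closure {t : G} {s : Set G} (hts : ∀ y ∈ s, Commute t y)
    (hE : 0 < E) (htE : t ^ E = 1) {x : G} (hx : x ∈ closure (insert t s)) :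
    ∃ m < E, (t ^ m)⁻¹ * x ∈ closure s := by
  have hcent : closure {t} ≤ centralizer (closure s : Set G) := by
    rw [closure_le, Set.singleton_subset_iff, centralizer_closure]
    exact fun y hy ↦ (hts y hy).symm.eq
  rw [← SetLike.mem_coe, Set.insert_eq, Subgroup.closure_union,
    coe_mul_of_left_le_normalizer_right _ _ (hcent.trans (centralizer_le_normalizer _))] at hx
  obtain ⟨a, ha, b, hb, rfl⟩ := hx
  obtain ⟨m, rfl⟩ : ∃ m : ℕ, t ^ m = a :=
    (isOfFinOrder_iff_pow_eq_one.2 ⟨E, hE, htE⟩).mem_powers_iff_mem_zpowers.2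
      (by rwa [zpowers_eq_closure])
  exact ⟨m % E, Nat.mod_lt m hE, by rwa [← pow_eq_pow_mod m htE, inv_mul_cancel_left]⟩

theorem commute_mk_of_commutator_le (hHN : ⁅H, H⁆ ≤ N) {x y : G} (hx : x ∈ H) (hy : y ∈ H) :
    Commute (x : G ⧸ N) y := by
  have h := (QuotientGroup.eq_one_iff _).2 (hHN (commutator_mem_commutator hx hy))
  rwa [← QuotientGroup.mk'_apply, map_commutatorElement,
    commutatorElement_eq_one_iff_commute] at h

/-- Modulo `N`, the generators in `ts` commute and have order dividing `E`, so every element of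
the group they generate is `∏ t ^ mₜ` with `mₜ < E`. -/
theorem exists_wordLengthLE_inv_mul_mem_of_mem_closure (hHN : ⁅H, H⁆ ≤ N) (hE : 0 < E)
    (hexp : ∀ g : G, g ^ E = 1) (ts : List G) (hts : ∀ t ∈ ts, t ∈ H ∧ WordLengthLE S ℓ t)
    {h : G}
    (hh : (h : G ⧸ N) ∈ Subgroup.closure ((QuotientGroup.mk : G → G ⧸ N) '' {x | x ∈ ts})) :
    ∃ w ∈ H, WordLengthLE S (ts.length * (E * ℓ)) w ∧ w⁻¹ * h ∈ N := by
  induction ts generalizing h with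
  | nil =>
    refine ⟨1, one_mem H, wordLengthLE_one S _, ?_⟩
    simpa [QuotientGroup.eq_one_iff] using hh
  | cons t ts ih =>
    obtain ⟨htH, htS⟩ := hts t List.mem_cons_self
    have hts' := fun u hu ↦ hts u (List.mem_cons_of_mem t hu)
    have himage : ((↑) '' {x | x ∈ t :: ts} : Set (G ⧸ N)) =
        insert ↑t ((↑) '' {x | x ∈ ts}) := by
      ext; simp [eq_comm]
    rw [himage] at hh
    obtain ⟨m, hmE, hm⟩ := exists_pow_lt_inv_mul_mem_closure
      (by rintro _ ⟨u, hu, rfl⟩; exact commute_mk_of_commutator_le hHN htH (hts' u hu).1) hE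
      (by rw [← QuotientGroup.mk_pow, hexp, QuotientGroup.mk_one]) hh
    obtain ⟨w, hwH, hwS, hwN⟩ := ih hts' (h := (t ^ m)⁻¹ * h) (by simpa using hm)
    refine ⟨t ^ m * w, mul_mem (pow_mem htH m) hwH, (htS.pow m).mul hwS |>.mono ?_, ?_⟩
    · rw [List.length_cons, Nat.succ_mul, add_comm]
      gcongr
    · simpa [mul_assoc] using hwN

theorem exists_wordLengthLE_inv_mul_mem [Finite G] (hHN : ⁅H, H⁆ ≤ N) (hE : 0 < E)
    (hexp : ∀ g : G, g ^ E = 1) {k : ℕ} (hk : Nat.card G ≤ 2 ^ k)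
    (hgen : H ≤ closure {x | x ∈ H ∧ WordLengthLE S ℓ x}) {h : G} (hh : h ∈ H) :
    ∃ w ∈ H, WordLengthLE S (k * (E * ℓ)) w ∧ w⁻¹ * h ∈ N := by
  obtain ⟨ts, htsT, hlen, hle⟩ :=
    exists_list_closure_le_sup {x | x ∈ H ∧ WordLengthLE S ℓ x} k ⊥ (by simpa using hk)
  rw [sup_bot_eq] at hle
  have hmk : (h : G ⧸ N) ∈
      Subgroup.closure ((QuotientGroup.mk : G → G ⧸ N) '' {x | x ∈ ts}) := by
    rw [← QuotientGroup.coe_mk', ← MonoidHom.map_closure]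
    exact mem_map_of_mem _ (hle (hgen hh))
  obtain ⟨w, hwH, hwS, hwN⟩ :=
    exists_wordLengthLE_inv_mul_mem_of_mem_closure hHN hE hexp ts htsT hmk
  exact ⟨w, hwH, hwS.mono (Nat.mul_le_mul_right _ hlen), hwN⟩

/-- Schreier's lemma: for a representative `u`, a generator `s` of `H` and the representative `w`
of `u * s`, the Schreier generator `u * s * w⁻¹` lies in `N`. -/
theorem le_closure_wordLengthLE_of_forall_exists (hNH : N ≤ H) {r : ℕ}
    (hrep : ∀ h ∈ H, ∃ w ∈ H, WordLengthLE S r w ∧ w⁻¹ * h ∈ N)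
    (hgen : H ≤ closure {x | x ∈ H ∧ WordLengthLE S ℓ x}) :
    N ≤ closure {x | x ∈ N ∧ WordLengthLE S (r + ℓ + r) x} := by
  set C := closure {x | x ∈ N ∧ WordLengthLE S (r + ℓ + r) x}
  have key : ∀ l : List G, (∀ s ∈ l, s ∈ H ∧ WordLengthLE S ℓ s) →
      ∀ u ∈ H, WordLengthLE S r u → u * l.prod ∈ N → u * l.prod ∈ C := by
    intro l
    induction l with
    | nil =>
      intro _ u _ hu huN
      rw [List.prod_nil, mul_one] at huN ⊢
      exact subset_closure ⟨huN, hu.mono (by omega)⟩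
    | cons s l ih =>
      intro hl u huH hu hN
      obtain ⟨hsH, hs⟩ := hl s List.mem_cons_self
      obtain ⟨w, hwH, hw, hwN⟩ := hrep (u * s) (mul_mem huH hsH)
      have hschreier : u * s * w⁻¹ ∈ N := by
        simpa [mul_assoc] using Normal.conj_mem inferInstance _ hwN w
      have hsplit : u * (s :: l).prod = u * s * w⁻¹ * (w * l.prod) := by
        rw [List.prod_cons]; group
      rw [hsplit] at hN ⊢
      refine mul_mem (subset_closure ⟨hschreier, (hu.mul hs).mul hw.inv⟩) ?_
      exact ih (fun x hx ↦ hl x (List.mem_cons_of_mem s hx)) w hwH hw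
        ((mul_mem_cancel_left hschreier).1 hN)
  intro x hx
  have hx' : x ∈ Submonoid.closure ({x | x ∈ H ∧ WordLengthLE S ℓ x} ∪
      {x | x ∈ H ∧ WordLengthLE S ℓ x}⁻¹) := by
    rw [← closure_toSubmonoid]
    exact hgen (hNH hx)
  obtain ⟨l, hl, rfl⟩ := Submonoid.exists_list_of_mem_closure hx'
  have hlH : ∀ s ∈ l, s ∈ H ∧ WordLengthLE S ℓ s := by
    intro s hs
    rcases hl s hs with hs | ⟨hsH, hsS⟩
    exacts [hs, ⟨inv_mem_iff.1 hsH, by simpa using hsS.inv⟩]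
  simpa using key l hlH 1 (one_mem H) (wordLengthLE_one S r) (by simpa using hx)

end Transversal

section Solvable

variable {G : Type*} [Group G] {S : Set G}

theorem wordLengthLE_of_forall_exists_inv_mul_mem {R d : ℕ} {D : ℕ → Subgroup G}
    (hd : D d = ⊥) (hrep : ∀ i < d, ∀ h ∈ D i, ∃ w, WordLengthLE S R w ∧ w⁻¹ * h ∈ D (i + 1))
    {g : G} (hg : g ∈ D 0) : WordLengthLE S (d * R) g := by
  suffices ∀ m i, i + m = d → ∀ g ∈ D i, WordLengthLE S (m * R) g from
    this d 0 (zero_add d) g hg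
  intro m
  induction m with
  | zero =>
    intro i hi g hg
    rw [add_zero] at hi
    rw [hi, hd, mem_bot] at hg
    exact hg ▸ wordLengthLE_one S _
  | succ m ih =>
    intro i hi g hg
    obtain ⟨w, hw, hwg⟩ := hrep i (by omega) g hg
    have := hw.mul (ih (i + 1) (by omega) _ hwg)
    rwa [mul_inv_cancel_left, add_comm, ← Nat.succ_mul] at this

theorem diamLe_of_derivedSeries_eq_bot [Finite G] {E k d : ℕ} (hE : 0 < E)
    (hexp : ∀ g : G, g ^ E = 1) (hk : Nat.card G ≤ 2 ^ k) (hd : derivedSeries G d = ⊥) :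
    diamLe G (d * (k * E * (2 * k * E + 1) ^ d)) := by
  intro S hS
  have hgen : ∀ i, derivedSeries G i ≤
      closure {x | x ∈ derivedSeries G i ∧ WordLengthLE S ((2 * k * E + 1) ^ i) x} := by
    intro i
    induction i with
    | zero =>
      have hSgen : S ⊆ {x | x ∈ derivedSeries G 0 ∧ WordLengthLE S ((2 * k * E + 1) ^ 0) x} :=
        fun y hy ↦ ⟨by simp, by simpa using wordLengthLE_one_of_mem hy⟩
      exact fun x _ ↦ closure_mono hSgen (hS ▸ mem_top x)
    | succ i ih =>
      have hN := le_closure_wordLengthLE_of_forall_exists (derivedSeries_antitone G i.le_succ)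
        (fun h hh ↦ exists_wordLengthLE_inv_mul_mem (derivedSeries_succ G i).ge hE hexp hk ih hh)
        ih
      rwa [show k * (E * (2 * k * E + 1) ^ i) + (2 * k * E + 1) ^ i +
        k * (E * (2 * k * E + 1) ^ i) = (2 * k * E + 1) ^ (i + 1) by ring] at hN
  intro g
  refine wordLengthLE_of_forall_exists_inv_mul_mem hd (fun i hi h hh ↦ ?_) (mem_top g)
  obtain ⟨w, -, hw, hwh⟩ :=
    exists_wordLengthLE_inv_mul_mem (derivedSeries_succ G i).ge hE hexp hk (hgen i) hh
  refine ⟨w, hw.mono ?_, hwh⟩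
  rw [← mul_assoc]
  gcongr
  omega

end Solvable

namespace Representation

section FixedSeries

variable {k G V : Type*} [CommRing k] [Group G] [AddCommGroup V] [Module k V]
  (ρ : Representation k G V)

/-- `fixedSeries ρ (j + 1) / fixedSeries ρ j` is the space of invariants of
`V / fixedSeries ρ j`. -/
def fixedSeries : ℕ → Submodule k V
  | 0 => ⊥
  | j + 1 => ⨅ g, (fixedSeries j).comap (ρ g - 1)

@[simp]
theorem fixedSeries_zero : ρ.fixedSeries 0 = ⊥ := rfl

theorem mem_fixedSeries_succ {j : ℕ} {x : V} :
    x ∈ ρ.fixedSeries (j + 1) ↔ ∀ g, ρ g x - x ∈ ρ.fixedSeries j := by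
  simp [fixedSeries]

theorem fixedSeries_le_comap (j : ℕ) (g : G) :
    ρ.fixedSeries j ≤ (ρ.fixedSeries j).comap (ρ g) := by
  induction j generalizing g with
  | zero => simp
  | succ j ih =>
    intro x hx
    rw [mem_fixedSeries_succ] at hx
    rw [Submodule.mem_comap, mem_fixedSeries_succ]
    intro h
    have hconj : ρ h (ρ g x) - ρ g x = ρ g (ρ (g⁻¹ * h * g) x - x) := by
      simp [map_sub, map_mul, Module.End.mul_apply]
    rw [hconj]
    exact ih g (hx _)

theorem fixedSeries_mono : Monotone ρ.fixedSeries := by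
  refine monotone_nat_of_le_succ fun j ↦ ?_
  induction j with
  | zero => simp
  | succ j ih =>
    exact fun x hx ↦ (mem_fixedSeries_succ ρ).2 fun g ↦ ih ((mem_fixedSeries_succ ρ).1 hx g)

theorem pow_sub_one_apply_eq_zero (g : G) {j : ℕ} {x : V} (hx : x ∈ ρ.fixedSeries j) :
    ((ρ g - 1) ^ j) x = 0 := by
  induction j generalizing x with
  | zero => simpa using hx
  | succ j ih => exact ih ((mem_fixedSeries_succ ρ).1 hx g)

end FixedSeries

section PGroup

variable {F G V : Type*} [Field F] [Group G] [AddCommGroup V] [Module F V]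
  (ρ : Representation F G V) {p : ℕ} [Fact p.Prime] [CharP F p] [Finite F]
  [FiniteDimensional F V]

/-- The number of fixed points of the `p`-group `G` on the nonzero `p`-group
`V / fixedSeries ρ j` is divisible by `p`, so some fixed point is nonzero. -/
theorem fixedSeries_lt_succ (hG : IsPGroup p G) {j : ℕ} (hj : ρ.fixedSeries j ≠ ⊤) :
    ρ.fixedSeries j < ρ.fixedSeries (j + 1) := by
  set W := ρ.fixedSeries j
  set σ := ρ.quotient W (ρ.fixedSeries_le_comap j)
  let _ : MulAction G (V ⧸ W) := MulAction.compHom _ σ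
  have : Finite (V ⧸ W) := Module.finite_of_finite F
  have : Nontrivial (V ⧸ W) := Submodule.Quotient.nontrivial_iff.2 hj
  obtain ⟨y, hy⟩ := exists_ne (0 : V ⧸ W)
  have hpy : addOrderOf y = p :=
    addOrderOf_eq_prime (by rw [← Nat.cast_smul_eq_nsmul F, CharP.cast_eq_zero, zero_smul]) hy
  obtain ⟨b, hb, hb0⟩ := hG.exists_fixed_point_of_prime_dvd_card_of_fixed_point (V ⧸ W)
    (hpy ▸ addOrderOf_dvd_natCard y) (a := 0) fun g ↦ (σ g).map_zero
  obtain ⟨x, rfl⟩ := Submodule.Quotient.mk_surjective W b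
  refine SetLike.lt_iff_le_and_exists.2 ⟨ρ.fixedSeries_mono j.le_succ, x, ?_, ?_⟩
  · exact (mem_fixedSeries_succ ρ).2 fun g ↦ (Submodule.Quotient.eq W).1 (hb g)
  · rwa [Ne, eq_comm, Submodule.Quotient.mk_eq_zero] at hb0

theorem fixedSeries_finrank (hG : IsPGroup p G) : ρ.fixedSeries (Module.finrank F V) = ⊤ := by
  by_contra hne
  have hgrow : ∀ j ≤ Module.finrank F V, j ≤ Module.finrank F (ρ.fixedSeries j) := by
    intro j
    induction j with
    | zero => simp
    | succ j ih =>
      intro hj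
      have hlt := ρ.fixedSeries_lt_succ hG (j := j) fun h ↦
        hne (top_unique (h ▸ ρ.fixedSeries_mono (by omega)))
      have := Submodule.finrank_lt_finrank_of_lt hlt
      omega
  exact hne (Submodule.eq_top_of_finrank_eq
    ((Submodule.finrank_le _).antisymm (hgrow _ le_rfl)))

end PGroup

section DropSubgroup

variable {k G V : Type*} [CommRing k] [Group G] [AddCommGroup V] [Module k V]
  (ρ : Representation k G V)

def dropSubgroup (d : ℕ) : Subgroup G where
  carrier := {g | ∀ j, ∀ x ∈ ρ.fixedSeries j, ρ g x - x ∈ ρ.fixedSeries (j - d)}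
  one_mem' := by simp
  mul_mem' {g h} hg hh j x hx := by
    have hsplit : ρ (g * h) x - x = ρ g (ρ h x - x) + (ρ g x - x) := by
      simp [map_sub, Module.End.mul_apply]
    rw [hsplit]
    exact add_mem (ρ.fixedSeries_le_comap _ g (hh j x hx)) (hg j x hx)
  inv_mem' {g} hg j x hx := by
    have hsplit : ρ g⁻¹ x - x = -(ρ g (ρ g⁻¹ x) - ρ g⁻¹ x) := by simp
    rw [hsplit]
    exact neg_mem (hg j _ (ρ.fixedSeries_le_comap j g⁻¹ hx))

variable {ρ} in
theorem mem_dropSubgroup {d : ℕ} {g : G} :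
    g ∈ ρ.dropSubgroup d ↔ ∀ j, ∀ x ∈ ρ.fixedSeries j, ρ g x - x ∈ ρ.fixedSeries (j - d) :=
  Iff.rfl

theorem dropSubgroup_one : ρ.dropSubgroup 1 = ⊤ := by
  refine eq_top_iff.2 fun g _ ↦ mem_dropSubgroup.2 fun j x hx ↦ ?_
  cases j with
  | zero => simp_all
  | succ j => exact (mem_fixedSeries_succ ρ).1 hx g

theorem dropSubgroup_antitone : Antitone ρ.dropSubgroup :=
  fun _ _ hd _ hg j x hx ↦ ρ.fixedSeries_mono (Nat.sub_le_sub_left hd j) (hg j x hx)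

theorem commutator_dropSubgroup_le (a b : ℕ) :
    ⁅ρ.dropSubgroup a, ρ.dropSubgroup b⁆ ≤ ρ.dropSubgroup (a + b) := by
  rw [Subgroup.commutator_le]
  intro g hg h hh j x hx
  set z := ρ (h * g)⁻¹ x
  have hz : z ∈ ρ.fixedSeries j := ρ.fixedSeries_le_comap j _ hx
  -- both sides equal `ρ g (ρ h z) - ρ h (ρ g z)`
  have hsplit : ρ ⁅g, h⁆ x - x =
      (ρ g (ρ h z - z) - (ρ h z - z)) - (ρ h (ρ g z - z) - (ρ g z - z)) := by
    have hx' : x = ρ h (ρ g z) := by simp [z, Module.End.mul_apply]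
    rw [hx', commutatorElement_def]
    simp only [map_mul, map_sub, Module.End.mul_apply, inv_self_apply]
    abel
  rw [hsplit]
  refine sub_mem ?_ ?_
  · simpa [Nat.sub_sub, add_comm b] using hg _ _ (hh j z hz)
  · simpa [Nat.sub_sub] using hh _ _ (hg j z hz)

theorem derivedSeries_le_dropSubgroup (i : ℕ) : derivedSeries G i ≤ ρ.dropSubgroup (2 ^ i) := by
  induction i with
  | zero => simp [dropSubgroup_one]
  | succ i ih =>
    rw [derivedSeries_succ, pow_succ, mul_two]
    exact (Subgroup.commutator_mono ih ih).trans (ρ.commutator_dropSubgroup_le _ _)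

theorem dropSubgroup_le_ker {m : ℕ} (hm : ρ.fixedSeries m = ⊤) :
    ρ.dropSubgroup m ≤ ρ.ker := by
  intro g hg
  ext x
  simpa [sub_eq_zero] using hg m x (hm ▸ Submodule.mem_top)

end DropSubgroup

theorem map_pow_expChar_pow_eq_one {F G V : Type*} [Field F] [Group G] [AddCommGroup V]
    [Module F V] [Nontrivial V] (ρ : Representation F G V) {p : ℕ} [ExpChar F p] {m e : ℕ}
    (hm : ρ.fixedSeries m = ⊤) (hme : m ≤ p ^ e) (g : G) : ρ (g ^ p ^ e) = 1 := by
  have : ExpChar (Module.End F V) p :=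
    expChar_of_injective_algebraMap (algebraMap F _).injective p
  have hfrob : ρ g ^ p ^ e - 1 = (ρ g - 1) ^ p ^ e := by
    rw [sub_pow_expChar_pow_of_commute p e (Commute.one_right _), one_pow]
  rw [map_pow, ← sub_eq_zero, hfrob, ← Nat.sub_add_cancel hme, pow_add]
  ext x
  simp [Module.End.mul_apply, ρ.pow_sub_one_apply_eq_zero g (hm ▸ Submodule.mem_top : x ∈ _)]

end Representation

namespace Matrix.GeneralLinearGroup

variable {F ι : Type*} [Field F] [Fintype ι] [DecidableEq ι]

def subgroupRep (P : Subgroup (GL ι F)) : Representation F P (ι → F) :=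
  (Units.coeHom _).comp (toLin.toMonoidHom.comp P.subtype)

theorem subgroupRep_injective (P : Subgroup (GL ι F)) : Function.Injective (subgroupRep P) :=
  fun _ _ h ↦ Subtype.ext (toLin.injective (Units.ext h))

theorem card_subgroup_le [Finite F] (P : Subgroup (GL ι F)) :
    Nat.card P ≤ Nat.card F ^ (Fintype.card ι * Fintype.card ι) :=
  calc Nat.card P ≤ Nat.card (Matrix ι ι F) :=
        Nat.card_le_card_of_injective (fun g ↦ (g : GL ι F).val)
          fun _ _ h ↦ Subtype.ext (Units.ext h)
    _ = Nat.card F ^ (Fintype.card ι * Fintype.card ι) := by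
        simp [Matrix, Nat.card_fun, pow_mul]

variable {P : Subgroup (GL ι F)} {p : ℕ} [Fact p.Prime] [CharP F p] [Finite F]

theorem derivedSeries_eq_bot_of_isPGroup (hP : IsPGroup p P) {d : ℕ}
    (hd : Fintype.card ι ≤ 2 ^ d) : derivedSeries P d = ⊥ := by
  have hker := (subgroupRep P).dropSubgroup_le_ker ((subgroupRep P).fixedSeries_finrank hP)
  rw [Module.finrank_fintype_fun_eq_card,
    (MonoidHom.ker_eq_bot_iff _).2 (subgroupRep_injective P)] at hker
  exact eq_bot_iff.2 <| ((subgroupRep P).derivedSeries_le_dropSubgroup d).trans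
    (((subgroupRep P).dropSubgroup_antitone hd).trans hker)

theorem pow_eq_one_of_isPGroup [Nonempty ι] (hP : IsPGroup p P) {e : ℕ}
    (he : Fintype.card ι ≤ p ^ e) (g : P) : g ^ p ^ e = 1 :=
  subgroupRep_injective P <| by
    rw [map_one]
    refine (subgroupRep P).map_pow_expChar_pow_eq_one ((subgroupRep P).fixedSeries_finrank hP) ?_ g
    rwa [Module.finrank_fintype_fun_eq_card]

end Matrix.GeneralLinearGroup

section Arithmetic

theorem Nat.sq_le_two_pow_succ (d : ℕ) : d ^ 2 ≤ 2 ^ (d + 1) := by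
  induction d with
  | zero => simp
  | succ d ih =>
    have hd : d < 2 ^ d := Nat.lt_two_pow_self
    rw [show 2 ^ (d + 1 + 1) = 4 * 2 ^ d by ring]
    rw [show 2 ^ (d + 1) = 2 * 2 ^ d by ring] at ih
    nlinarith

/-- With `d = log₂ n + 1` we have `n, d ≤ q ^ d` and `d ^ 2 ≤ 2 ^ (d + 1) ≤ 4 n`, so the
exponent `3 d ^ 2 + 8 d + 2` of the bound is at most `13 d ^ 2 ≤ 52 n`. -/
theorem succ_log_mul_mul_pow_le_pow {q n K : ℕ} (hq : 2 ≤ q) (hn : n ≠ 0) (hK : K ≤ q ^ 2 * n ^ 3) :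
    (Nat.log 2 n + 1) * (K * (2 * K + 1) ^ (Nat.log 2 n + 1)) ≤ q ^ (52 * n) := by
  set d := Nat.log 2 n + 1
  have h2d : 2 ^ d ≤ 2 * n := by
    rw [pow_succ, mul_comm]; exact Nat.mul_le_mul_left 2 (Nat.pow_log_le_self 2 hn)
  have hnq : n ≤ q ^ d :=
    (Nat.lt_pow_succ_log_self one_lt_two n).le.trans (Nat.pow_le_pow_left hq d)
  have hdq : d ≤ q ^ d := Nat.lt_two_pow_self.le.trans (Nat.pow_le_pow_left hq d)
  have hKq : K ≤ q ^ (2 + 3 * d) := by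
    calc K ≤ q ^ 2 * (q ^ d) ^ 3 := hK.trans (by gcongr)
      _ = q ^ (2 + 3 * d) := by ring
  have hcq : 2 * K + 1 ≤ q ^ (4 + 3 * d) := by
    have h1 : 1 ≤ q ^ (2 + 3 * d) := Nat.one_le_pow _ _ (by omega)
    have h4 : 4 ≤ q ^ 2 := by nlinarith
    calc 2 * K + 1 ≤ q ^ 2 * q ^ (2 + 3 * d) := by nlinarith
      _ = q ^ (4 + 3 * d) := by ring
  have hexp : d + ((2 + 3 * d) + (4 + 3 * d) * d) ≤ 52 * n := by
    have hsq := Nat.sq_le_two_pow_succ d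
    have hdd : d ≤ d ^ 2 := Nat.le_self_pow two_ne_zero d
    have hd1 : 1 ≤ d ^ 2 := Nat.one_le_pow _ _ (by omega)
    rw [show 2 ^ (d + 1) = 2 * 2 ^ d by ring] at hsq
    nlinarith
  calc d * (K * (2 * K + 1) ^ d)
      ≤ q ^ d * (q ^ (2 + 3 * d) * (q ^ (4 + 3 * d)) ^ d) := by gcongr
    _ = q ^ (d + ((2 + 3 * d) + (4 + 3 * d) * d)) := by rw [← pow_mul, ← pow_add, ← pow_add]
    _ ≤ q ^ (52 * n) := Nat.pow_le_pow_right (by omega) hexp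

end Arithmetic

/-- There is an absolute constant `c > 0` such that for every prime `p`,
every finite field `F` of characteristic `p` (whose cardinality `q` is then a power of `p`),
every `n ≥ 1` and every `p`-subgroup `P` of `GL(n, F)`, one has `diam P ≤ q ^ (c * n)`. -/
theorem diam_p_subgroup_le :
    ∃ c : ℝ, 0 < c ∧
      ∀ (p : ℕ), p.Prime →
        ∀ (F : Type) [Field F] [Fintype F], CharP F p →
          ∀ (n : ℕ), 1 ≤ n →
            ∀ P : Subgroup (GL (Fin n) F), IsPGroup p P →
              (diam P : ℝ) ≤ (Fintype.card F : ℝ) ^ (c * n) := by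
  refine ⟨52, by norm_num, fun p hp F _ _ _ n hn P hP ↦ ?_⟩
  have : Fact p.Prime := ⟨hp⟩
  have : Nonempty (Fin n) := ⟨⟨0, hn⟩⟩
  obtain ⟨f, -, hqp⟩ := FiniteField.card F p
  set q := Fintype.card F
  have hk : Nat.card P ≤ 2 ^ (q * n * n) :=
    calc Nat.card P ≤ q ^ (n * n) := by simpa using Matrix.GeneralLinearGroup.card_subgroup_le P
      _ ≤ (2 ^ q) ^ (n * n) := Nat.pow_le_pow_left Nat.lt_two_pow_self.le _
      _ = 2 ^ (q * n * n) := by rw [← pow_mul, mul_assoc]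
  have hE : p ^ (Nat.log p n + 1) ≤ q * n := by
    rw [pow_succ']
    exact Nat.mul_le_mul (hqp ▸ Nat.le_self_pow f.ne_zero p) (Nat.pow_log_le_self p (by omega))
  have hdiam := diam_le_of_diamLe <| diamLe_of_derivedSeries_eq_bot (pow_pos hp.pos _)
    (Matrix.GeneralLinearGroup.pow_eq_one_of_isPGroup hP
      (by simpa using (Nat.lt_pow_succ_log_self hp.one_lt n).le))
    hk (Matrix.GeneralLinearGroup.derivedSeries_eq_bot_of_isPGroup hP
      (by simpa using (Nat.lt_pow_succ_log_self one_lt_two n).le))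
  have hbound := succ_log_mul_mul_pow_le_pow (q := q) (n := n)
    (K := q * n * n * p ^ (Nat.log p n + 1)) Fintype.one_lt_card (by omega) <|
    calc q * n * n * p ^ (Nat.log p n + 1) ≤ q * n * n * (q * n) := by gcongr
      _ = q ^ 2 * n ^ 3 := by ring
  rw [show (52 : ℝ) * n = ((52 * n : ℕ) : ℝ) by push_cast; ring, Real.rpow_natCast]
  exact_mod_cast hdiam.trans (by rwa [mul_assoc 2])
end

section
/- Let p be a prime, q a power of p, and m = 2^k for an integer k ≥ 1. Then every Sylow p-subgroup S of GL(m, F_q) has an elementary abelian normal subgroup A (abelian of exponent p) with |A| = q^(m²/4) such that the quotient S/A is isomorphic to the direct product of two Sylow p-subgroups of GL(m/2, F_q). -/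
/-! For Sylow `p`-subgroups `Q₁, Q₂` of `GL(n, F)`, the block upper triangular matrices
`[[a, b], [0, d]]` with `a ∈ Q₁` and `d ∈ Q₂` form a subgroup of `GL(2n, F)` of order
`|Q₁| |Q₂| q^(n²)`. Since the `p`-part of `|GL(m, F)| = ∏_{i<m} (q^m - q^i)` is `q^(m(m-1)/2)`
and `2n(2n-1)/2 = 2 · n(n-1)/2 + n²`, this subgroup is a Sylow subgroup of `GL(2n, F)`, so every
Sylow subgroup is isomorphic to it. Reading off the diagonal blocks maps it onto `Q₁ × Q₂`, and
the kernel, the matrices `[[1, b], [0, 1]]`, is isomorphic to the additive group of `n × n`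
matrices over `F`: elementary abelian of order `q^(n²)`. -/

open Matrix Function

theorem Nat.card_matrix {m n R : Type*} [Finite m] [Finite n] :
    Nat.card (Matrix m n R) = Nat.card R ^ (Nat.card m * Nat.card n) := by
  simp [Matrix, Nat.card_fun, ← pow_mul, mul_comm]

theorem Nat.factorization_pow_sub_pow {p a b : ℕ} (hp : p.Prime) (hba : b < a) :
    (p ^ a - p ^ b).factorization p = b := by
  have hsplit : p ^ a - p ^ b = p ^ b * (p ^ (a - b) - 1) := by
    rw [Nat.mul_sub_one, ← pow_add, Nat.add_sub_cancel' hba.le]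
  have hcop : Coprime p (p ^ (a - b) - 1) :=
    ((coprime_self_sub_right (one_le_pow _ _ hp.pos)).2 (coprime_one_right _)).coprime_dvd_left
      (dvd_pow_self p (Nat.sub_ne_zero_of_lt hba))
  have hne : p ^ (a - b) - 1 ≠ 0 :=
    Nat.sub_ne_zero_of_lt (one_lt_pow (Nat.sub_ne_zero_of_lt hba) hp.one_lt)
  rw [hsplit, factorization_mul (pow_ne_zero _ hp.ne_zero) hne, Finsupp.add_apply,
    hp.factorization_pow, Finsupp.single_eq_same,
    factorization_eq_zero_of_not_dvd ((hp.coprime_iff_not_dvd).1 hcop), add_zero]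

theorem Matrix.factorization_card_GL {F : Type*} [Field F] [Fintype F] {p r : ℕ} (hp : p.Prime)
    (hq : Fintype.card F = p ^ r) (m : ℕ) :
    (Nat.card (GL (Fin m) F)).factorization p = r * ∑ i ∈ Finset.range m, i := by
  have hr : r ≠ 0 := by
    rintro rfl
    exact (Fintype.one_lt_card (α := F)).ne' (by rw [hq, pow_zero])
  have hq1 : 1 < Fintype.card F := Fintype.one_lt_card
  rw [card_GL_field, Nat.factorization_prod fun i _ ↦ Nat.sub_ne_zero_of_lt
      (Nat.pow_lt_pow_right hq1 i.2), Finsupp.finsetSum_apply,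
    Fin.sum_univ_eq_sum_range (fun i ↦ (Fintype.card F ^ m - Fintype.card F ^ i).factorization p),
    Finset.mul_sum]
  refine Finset.sum_congr rfl fun i hi ↦ ?_
  rw [hq, ← pow_mul, ← pow_mul, Nat.factorization_pow_sub_pow hp
    (Nat.mul_lt_mul_left (Nat.pos_of_ne_zero hr) |>.2 (Finset.mem_range.1 hi))]

namespace Matrix.GeneralLinearGroup

variable {R : Type*} [CommRing R] {m n : Type*} [Fintype m] [DecidableEq m] [Fintype n]
  [DecidableEq n]

def upperBlockTriangular (a : GL m R) (d : GL n R) (b : Matrix m n R) : GL (m ⊕ n) R where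
  val := fromBlocks a b 0 d
  inv := fromBlocks (a⁻¹ : GL m R) (-((↑a⁻¹ : Matrix m m R) * b * (↑d⁻¹ : Matrix n n R))) 0
    (d⁻¹ : GL n R)
  val_inv := by simp [fromBlocks_multiply, ← Matrix.mul_assoc]
  inv_val := by simp [fromBlocks_multiply, Matrix.mul_assoc]

@[simp]
lemma coe_upperBlockTriangular (a : GL m R) (d : GL n R) (b : Matrix m n R) :
    (upperBlockTriangular a d b : Matrix (m ⊕ n) (m ⊕ n) R) =
      fromBlocks (a : Matrix m m R) b 0 (d : Matrix n n R) :=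
  rfl

lemma upperBlockTriangular_mul (a a' : GL m R) (d d' : GL n R) (b b' : Matrix m n R) :
    upperBlockTriangular a d b * upperBlockTriangular a' d' b' =
      upperBlockTriangular (a * a') (d * d')
        ((a : Matrix m m R) * b' + b * (d' : Matrix n n R)) := by
  ext : 1
  simp [fromBlocks_multiply]

lemma upperBlockTriangular_one_one_zero :
    upperBlockTriangular (1 : GL m R) (1 : GL n R) 0 = 1 := by
  ext : 1
  simp

lemma upperBlockTriangular_inv (a : GL m R) (d : GL n R) (b : Matrix m n R) :
    (upperBlockTriangular a d b)⁻¹ =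
      upperBlockTriangular a⁻¹ d⁻¹ (-((↑a⁻¹ : Matrix m m R) * b * (↑d⁻¹ : Matrix n n R))) :=
  Units.ext rfl

lemma upperBlockTriangular_inj {a a' : GL m R} {d d' : GL n R} {b b' : Matrix m n R} :
    upperBlockTriangular a d b = upperBlockTriangular a' d' b' ↔ a = a' ∧ d = d' ∧ b = b' := by
  refine ⟨fun h ↦ ?_, by rintro ⟨rfl, rfl, rfl⟩; rfl⟩
  have h' := congrArg (fun x : GL (m ⊕ n) R ↦ (x : Matrix (m ⊕ n) (m ⊕ n) R)) h
  simp only [coe_upperBlockTriangular, fromBlocks_inj] at h'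
  exact ⟨Units.ext h'.1, Units.ext h'.2.2.2, h'.2.1⟩

lemma upperBlockTriangular_one_one_mul (b b' : Matrix m n R) :
    upperBlockTriangular (1 : GL m R) (1 : GL n R) b * upperBlockTriangular 1 1 b' =
      upperBlockTriangular 1 1 (b + b') := by
  rw [upperBlockTriangular_mul]
  simp [add_comm]

lemma upperBlockTriangular_one_one_pow (b : Matrix m n R) (j : ℕ) :
    upperBlockTriangular (1 : GL m R) (1 : GL n R) b ^ j = upperBlockTriangular 1 1 (j • b) := by
  induction j with
  | zero => rw [pow_zero, zero_nsmul, upperBlockTriangular_one_one_zero]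
  | succ j ih => rw [pow_succ, ih, upperBlockTriangular_one_one_mul, succ_nsmul]

section Subgroup

variable (Q₁ : Subgroup (GL m R)) (Q₂ : Subgroup (GL n R))

def upperBlockTriangularSubgroup : Subgroup (GL (m ⊕ n) R) where
  carrier := {x | ∃ a ∈ Q₁, ∃ d ∈ Q₂, ∃ b, upperBlockTriangular a d b = x}
  one_mem' := ⟨1, Q₁.one_mem, 1, Q₂.one_mem, 0, upperBlockTriangular_one_one_zero⟩
  mul_mem' := by
    rintro _ _ ⟨a, ha, d, hd, b, rfl⟩ ⟨a', ha', d', hd', b', rfl⟩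
    exact ⟨_, Q₁.mul_mem ha ha', _, Q₂.mul_mem hd hd', _, (upperBlockTriangular_mul ..).symm⟩
  inv_mem' := by
    rintro _ ⟨a, ha, d, hd, b, rfl⟩
    exact ⟨_, Q₁.inv_mem ha, _, Q₂.inv_mem hd, _, (upperBlockTriangular_inv ..).symm⟩

variable {Q₁ Q₂}

lemma upperBlockTriangular_mem {a : GL m R} {d : GL n R} (ha : a ∈ Q₁) (hd : d ∈ Q₂)
    (b : Matrix m n R) : upperBlockTriangular a d b ∈ upperBlockTriangularSubgroup Q₁ Q₂ :=
  ⟨a, ha, d, hd, b, rfl⟩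

noncomputable def upperBlockTriangularEquiv :
    Q₁ × Q₂ × Matrix m n R ≃ upperBlockTriangularSubgroup Q₁ Q₂ :=
  Equiv.ofBijective (fun t ↦ ⟨_, upperBlockTriangular_mem t.1.2 t.2.1.2 t.2.2⟩) <| by
    refine ⟨fun t s h ↦ ?_, fun x ↦ ?_⟩
    · obtain ⟨h₁, h₂, h₃⟩ := upperBlockTriangular_inj.1 (congrArg Subtype.val h)
      exact Prod.ext (Subtype.ext h₁) (Prod.ext (Subtype.ext h₂) h₃)
    · obtain ⟨a, ha, d, hd, b, hx⟩ := x.2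
      exact ⟨(⟨a, ha⟩, ⟨d, hd⟩, b), Subtype.ext hx⟩

lemma coe_upperBlockTriangularEquiv (t : Q₁ × Q₂ × Matrix m n R) :
    (upperBlockTriangularEquiv t : GL (m ⊕ n) R) = upperBlockTriangular t.1 t.2.1 t.2.2 := rfl

lemma upperBlockTriangularEquiv_one :
    upperBlockTriangularEquiv (1, 1, 0) = (1 : upperBlockTriangularSubgroup Q₁ Q₂) :=
  Subtype.ext upperBlockTriangular_one_one_zero

lemma upperBlockTriangularEquiv_mul (t s : Q₁ × Q₂ × Matrix m n R) :
    upperBlockTriangularEquiv t * upperBlockTriangularEquiv s =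
      upperBlockTriangularEquiv (t.1 * s.1, t.2.1 * s.2.1,
        ((t.1 : GL m R) : Matrix m m R) * s.2.2 + t.2.2 * ((s.2.1 : GL n R) : Matrix n n R)) :=
  Subtype.ext (upperBlockTriangular_mul ..)

noncomputable def diagonalBlocks : upperBlockTriangularSubgroup Q₁ Q₂ →* Q₁ × Q₂ where
  toFun x := ((upperBlockTriangularEquiv.symm x).1, (upperBlockTriangularEquiv.symm x).2.1)
  map_one' := by simp [← upperBlockTriangularEquiv_one]
  map_mul' x y := by
    obtain ⟨t, rfl⟩ := upperBlockTriangularEquiv.surjective x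
    obtain ⟨s, rfl⟩ := upperBlockTriangularEquiv.surjective y
    simp [upperBlockTriangularEquiv_mul]

lemma diagonalBlocks_upperBlockTriangularEquiv (t : Q₁ × Q₂ × Matrix m n R) :
    diagonalBlocks (upperBlockTriangularEquiv t) = (t.1, t.2.1) := by
  simp [diagonalBlocks]

lemma diagonalBlocks_surjective : Surjective (diagonalBlocks (Q₁ := Q₁) (Q₂ := Q₂)) :=
  fun ad ↦ ⟨upperBlockTriangularEquiv (ad.1, ad.2, 0), diagonalBlocks_upperBlockTriangularEquiv _⟩

lemma mem_ker_diagonalBlocks {x : upperBlockTriangularSubgroup Q₁ Q₂} :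
    x ∈ (diagonalBlocks (Q₁ := Q₁) (Q₂ := Q₂)).ker ↔
      ∃ b, (x : GL (m ⊕ n) R) = upperBlockTriangular 1 1 b := by
  obtain ⟨t, rfl⟩ := upperBlockTriangularEquiv.surjective x
  simp [diagonalBlocks_upperBlockTriangularEquiv, coe_upperBlockTriangularEquiv,
    upperBlockTriangular_inj, Prod.ext_iff]

lemma ker_diagonalBlocks_commute {x y : upperBlockTriangularSubgroup Q₁ Q₂}
    (hx : x ∈ (diagonalBlocks (Q₁ := Q₁) (Q₂ := Q₂)).ker)
    (hy : y ∈ (diagonalBlocks (Q₁ := Q₁) (Q₂ := Q₂)).ker) : x * y = y * x := by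
  obtain ⟨b, hb⟩ := mem_ker_diagonalBlocks.1 hx
  obtain ⟨b', hb'⟩ := mem_ker_diagonalBlocks.1 hy
  ext : 1
  simp only [Subgroup.coe_mul, hb, hb', upperBlockTriangular_one_one_mul, add_comm]

lemma ker_diagonalBlocks_pow_char (p : ℕ) [CharP R p] {x : upperBlockTriangularSubgroup Q₁ Q₂}
    (hx : x ∈ (diagonalBlocks (Q₁ := Q₁) (Q₂ := Q₂)).ker) : x ^ p = 1 := by
  obtain ⟨b, hb⟩ := mem_ker_diagonalBlocks.1 hx
  ext : 1
  rw [SubmonoidClass.coe_pow, hb, upperBlockTriangular_one_one_pow, ← Nat.cast_smul_eq_nsmul R,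
    CharP.cast_eq_zero, zero_smul, upperBlockTriangular_one_one_zero, OneMemClass.coe_one]

lemma card_ker_diagonalBlocks [Finite R] :
    Nat.card (diagonalBlocks (Q₁ := Q₁) (Q₂ := Q₂)).ker =
      Nat.card R ^ (Nat.card m * Nat.card n) := by
  have hbij : Bijective fun b : Matrix m n R ↦
      (⟨upperBlockTriangularEquiv (1, 1, b), mem_ker_diagonalBlocks.2 ⟨b, rfl⟩⟩ :
        (diagonalBlocks (Q₁ := Q₁) (Q₂ := Q₂)).ker) := by
    refine ⟨fun b b' h ↦ ?_, fun x ↦ ?_⟩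
    · simpa using upperBlockTriangularEquiv.injective (congrArg Subtype.val h)
    · obtain ⟨b, hb⟩ := mem_ker_diagonalBlocks.1 x.2
      exact ⟨b, Subtype.ext (Subtype.ext hb.symm)⟩
  rw [← Nat.card_eq_of_bijective _ hbij, Nat.card_matrix]

lemma card_upperBlockTriangularSubgroup [Finite R] :
    Nat.card (upperBlockTriangularSubgroup Q₁ Q₂) =
      Nat.card Q₁ * Nat.card Q₂ * Nat.card R ^ (Nat.card m * Nat.card n) := by
  rw [← Nat.card_congr upperBlockTriangularEquiv, Nat.card_prod, Nat.card_prod, mul_assoc,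
    Nat.card_matrix]

end Subgroup

lemma card_upperBlockTriangularSubgroup_of_sylow {F : Type*} [Field F] [Fintype F] {p n : ℕ}
    [Fact p.Prime] [CharP F p] (Q₁ Q₂ : Sylow p (GL (Fin n) F)) :
    Nat.card (upperBlockTriangularSubgroup (Q₁ : Subgroup (GL (Fin n) F))
      (Q₂ : Subgroup (GL (Fin n) F))) =
      p ^ (Nat.card (GL (Fin (n + n)) F)).factorization p := by
  obtain ⟨r, hp, hq⟩ := FiniteField.card F p
  rw [card_upperBlockTriangularSubgroup, Q₁.card_eq_multiplicity, Q₂.card_eq_multiplicity,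
    factorization_card_GL hp hq, factorization_card_GL hp hq, Nat.card_eq_fintype_card (α := F),
    hq, Finset.sum_range_add, Finset.sum_add_distrib]
  simp only [Nat.card_fin, Finset.sum_const, Finset.card_range, smul_eq_mul]
  ring

end Matrix.GeneralLinearGroup

open Matrix.GeneralLinearGroup

def HasSylowPairQuotient (p : ℕ) (F : Type*) [Field F] [Fintype F] (n : ℕ) (G : Type*)
    [Group G] : Prop :=
  ∃ A : Subgroup G, A.Normal ∧ (∀ a ∈ A, ∀ b ∈ A, a * b = b * a) ∧ (∀ a ∈ A, a ^ p = 1) ∧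
    Nat.card A = Fintype.card F ^ (n * n) ∧
    ∃ Q₁ Q₂ : Sylow p (GL (Fin n) F), ∃ φ : G →* Q₁ × Q₂, Surjective φ ∧ φ.ker = A

lemma HasSylowPairQuotient.of_mulEquiv {p n : ℕ} {F : Type*} [Field F] [Fintype F]
    {G H : Type*} [Group G] [Group H] (e : G ≃* H) (h : HasSylowPairQuotient p F n G) :
    HasSylowPairQuotient p F n H := by
  obtain ⟨A, -, hcomm, hpow, hcard, Q₁, Q₂, φ, hφ, rfl⟩ := h
  refine ⟨_, MonoidHom.normal_ker _, fun a ha b hb ↦ e.symm.injective ?_,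
    fun a ha ↦ e.symm.injective ?_, ?_, Q₁, Q₂, φ.comp (e.symm : H →* G),
    hφ.comp e.symm.surjective, rfl⟩
  · simpa using hcomm _ ha _ hb
  · simpa using hpow _ ha
  · rw [MonoidHom.ker_comp_mulEquiv, Subgroup.card_map_of_injective e.symm.symm.injective, hcard]

lemma hasSylowPairQuotient_upperBlockTriangularSubgroup {F : Type*} [Field F] [Fintype F]
    {p n : ℕ} [CharP F p] (Q₁ Q₂ : Sylow p (GL (Fin n) F)) :
    HasSylowPairQuotient p F n (upperBlockTriangularSubgroup (Q₁ : Subgroup (GL (Fin n) F))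
      (Q₂ : Subgroup (GL (Fin n) F))) :=
  ⟨_, MonoidHom.normal_ker _, fun _ ha _ hb ↦ ker_diagonalBlocks_commute ha hb,
    fun _ ha ↦ ker_diagonalBlocks_pow_char p ha,
    by rw [card_ker_diagonalBlocks, Nat.card_eq_fintype_card, Nat.card_fin],
    Q₁, Q₂, diagonalBlocks, diagonalBlocks_surjective, rfl⟩

/-- Let `p` be a prime, `F` a finite field of characteristic `p` with `q`
elements, and `m = 2 ^ k` with `k ≥ 1`. Every Sylow `p`-subgroup `S` of `GL(m, F)` has an
elementary abelian (abelian of exponent `p`) normal subgroup `A` with `|A| = q ^ (m² / 4)`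
such that `S / A` is isomorphic to the direct product of two Sylow `p`-subgroups of
`GL(m / 2, F)`.  (The isomorphism `S / A ≃ Q₁ × Q₂` is expressed by a surjective
homomorphism `S →* Q₁ × Q₂` with kernel `A`.) -/
theorem sylow_GL_structure
    (p : ℕ) (hp : p.Prime)
    (F : Type) [Field F] [Fintype F] [CharP F p]
    (k : ℕ) (hk : 1 ≤ k)
    (S : Sylow p (GL (Fin (2 ^ k)) F)) :
    ∃ A : Subgroup (S : Subgroup (GL (Fin (2 ^ k)) F)),
      A.Normal ∧
      (∀ a ∈ A, ∀ b ∈ A, a * b = b * a) ∧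
      (∀ a ∈ A, a ^ p = 1) ∧
      Nat.card A = Fintype.card F ^ (2 ^ k * 2 ^ k / 4) ∧
      ∃ Q₁ Q₂ : Sylow p (GL (Fin (2 ^ (k - 1))) F),
        ∃ φ : (S : Subgroup (GL (Fin (2 ^ k)) F)) →* Q₁ × Q₂,
          Function.Surjective φ ∧ φ.ker = A := by
  have := Fact.mk hp
  set n := 2 ^ (k - 1)
  have hn : n + n = 2 ^ k := by rw [← two_mul, ← pow_succ', Nat.sub_add_cancel hk]
  have hexp : 2 ^ k * 2 ^ k / 4 = n * n := by rw [← hn]; ring_nf; omega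
  obtain ⟨Q⟩ : Nonempty (Sylow p (GL (Fin n) F)) := inferInstance
  let e : GL (Fin n ⊕ Fin n) F ≃* GL (Fin (2 ^ k)) F :=
    Units.mapEquiv (reindexAlgEquiv F F (finSumFinEquiv.trans (finCongr hn))).toMulEquiv
  let P := upperBlockTriangularSubgroup (Q : Subgroup (GL (Fin n) F)) (Q : Subgroup (GL (Fin n) F))
  let S₀ : Sylow p (GL (Fin (2 ^ k)) F) := Sylow.ofCard (P.map e.toMonoidHom) <| by
    rw [Subgroup.card_map_of_injective (f := e.toMonoidHom) e.injective,
      card_upperBlockTriangularSubgroup_of_sylow, hn]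
  rw [hexp]
  exact (hasSylowPairQuotient_upperBlockTriangularSubgroup Q Q).of_mulEquiv
    ((P.equivMapOfInjective _ e.injective).trans (S₀.equiv S))
end

section
/- Let V be a vector space of finite dimension n ≥ 1 over a finite field F, and let A be an abelian subgroup of GL(V) acting irreducibly on V, i.e., the only F-subspaces U of V satisfying a(U) ⊆ U for all a ∈ A are 0 and V. Then A is cyclic and |A| ≤ |V| − 1. -/
/-!
By Schur's lemma, every nonzero endomorphism commuting with an irreducible family is injective,
since its kernel is invariant. For an abelian `A ≤ GL(V)` this makes the commutative algebra
generated by `A` a domain, and a finite subgroup of the units of a domain is cyclic. Applied to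
differences `a - b` it also makes `a ↦ a v` injective for any `v ≠ 0`, embedding `A` into
`V \ {0}`.
-/

open scoped IsMulCommutative

namespace Module.End

variable {R V : Type*} [CommRing R] [AddCommGroup V] [Module R V]

def ActsIrreducibly (S : Set (Module.End R V)) : Prop :=
  ∀ U : Submodule R V, (∀ s ∈ S, U.map s ≤ U) → U = ⊥ ∨ U = ⊤

variable {S : Set (Module.End R V)}

theorem ActsIrreducibly.injective_of_forall_commute (hS : ActsIrreducibly S)
    {e : Module.End R V} (he : ∀ s ∈ S, Commute s e) (he0 : e ≠ 0) :
    Function.Injective e := by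
  have hker : ∀ s ∈ S, (LinearMap.ker e).map s ≤ LinearMap.ker e := by
    rintro s hs _ ⟨v, hv, rfl⟩
    simp only [SetLike.mem_coe, LinearMap.mem_ker] at hv ⊢
    rw [← Module.End.mul_apply, ← (he s hs).eq, Module.End.mul_apply, hv, map_zero]
  rcases hS _ hker with h | h
  · exact LinearMap.ker_eq_bot.mp h
  · exact absurd (LinearMap.ker_eq_top.mp h) he0

theorem ActsIrreducibly.isDomain_adjoin [Nontrivial V] (hS : ActsIrreducibly S)
    (hcomm : ∀ a ∈ S, ∀ b ∈ S, a * b = b * a) : IsDomain (Algebra.adjoin R S) := by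
  have hcomm_adjoin : ∀ x ∈ Algebra.adjoin R S, ∀ s ∈ S, Commute s x := fun x hx s hs =>
    (Subalgebra.mem_centralizer_iff R).mp (Algebra.adjoin_le_centralizer_centralizer R S hx) s
      fun t ht => hcomm t ht s hs
  have : NoZeroDivisors (Algebra.adjoin R S) := by
    refine ⟨fun {x y} hxy => or_iff_not_imp_left.mpr fun hx => ?_⟩
    have hx' : (x : Module.End R V) ≠ 0 := fun h => hx (Subtype.ext h)
    refine Subtype.ext (LinearMap.ext fun v => ?_)
    refine hS.injective_of_forall_commute (hcomm_adjoin x x.2) hx' ?_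
    simpa using congrArg (fun f : Module.End R V => f v) (congrArg Subtype.val hxy)
  exact NoZeroDivisors.to_isDomain _

end Module.End

namespace Subgroup

open Module.End

variable {R V : Type*} [CommRing R] [AddCommGroup V] [Module R V]
  {G : Subgroup (LinearMap.GeneralLinearGroup R V)}

theorem isCyclic_of_actsIrreducibly [Nontrivial V] [Finite G]
    (hcomm : ∀ a ∈ G, ∀ b ∈ G, a * b = b * a)
    (hG : ActsIrreducibly (Units.val '' (G : Set (LinearMap.GeneralLinearGroup R V)))) :
    IsCyclic G := by
  have hcomm' : ∀ x ∈ Units.val '' (G : Set (LinearMap.GeneralLinearGroup R V)),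
      ∀ y ∈ Units.val '' (G : Set (LinearMap.GeneralLinearGroup R V)), x * y = y * x := by
    rintro _ ⟨a, ha, rfl⟩ _ ⟨b, hb, rfl⟩
    exact congrArg Units.val (hcomm a ha b hb)
  have := Algebra.isMulCommutative_adjoin R hcomm'
  have := hG.isDomain_adjoin hcomm'
  let f : G →* Algebra.adjoin R (Units.val '' (G : Set (LinearMap.GeneralLinearGroup R V))) :=
    { toFun := fun a => ⟨a.1, Algebra.subset_adjoin ⟨a, a.2, rfl⟩⟩
      map_one' := rfl
      map_mul' := fun _ _ => rfl }
  exact isCyclic_of_injective_ringHom f fun a b h =>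
    Subtype.ext (Units.ext (congrArg Subtype.val h))

theorem injective_apply_of_actsIrreducibly (hcomm : ∀ a ∈ G, ∀ b ∈ G, a * b = b * a)
    (hG : ActsIrreducibly (Units.val '' (G : Set (LinearMap.GeneralLinearGroup R V))))
    {v : V} (hv : v ≠ 0) : Function.Injective fun a : G => (a.1 : Module.End R V) v := by
  intro a b hab
  by_contra hne
  have hsub : (a.1 : Module.End R V) - b.1 ≠ 0 :=
    sub_ne_zero.mpr fun h => hne (Subtype.ext (Units.ext h))
  refine hv (hG.injective_of_forall_commute ?_ hsub ?_)
  · rintro _ ⟨c, hc, rfl⟩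
    exact Commute.sub_right (congrArg Units.val (hcomm c hc a a.2))
      (congrArg Units.val (hcomm c hc b b.2))
  · simpa [sub_eq_zero] using hab

theorem card_le_card_sub_one_of_actsIrreducibly [Nontrivial V] [Finite V]
    (hcomm : ∀ a ∈ G, ∀ b ∈ G, a * b = b * a)
    (hG : ActsIrreducibly (Units.val '' (G : Set (LinearMap.GeneralLinearGroup R V)))) :
    Nat.card G ≤ Nat.card V - 1 := by
  obtain ⟨v, hv⟩ := exists_ne (0 : V)
  have horbit := injective_apply_of_actsIrreducibly hcomm hG hv
  have : Fintype V := Fintype.ofFinite V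
  have : Fintype G := @Fintype.ofFinite _ (Finite.of_injective _ horbit)
  rw [Nat.card_eq_fintype_card, Nat.card_eq_fintype_card]
  refine Nat.le_sub_one_of_lt (Fintype.card_lt_of_injective_of_notMem _ horbit (b := 0) ?_)
  rintro ⟨a, ha⟩
  exact hv ((LinearMap.GeneralLinearGroup.generalLinearEquiv R V a.1).map_eq_zero_iff.mp ha)

end Subgroup

/-- Let `V` be a vector space of finite dimension `n ≥ 1` over a finite
field `F` and let `A` be an abelian subgroup of `GL(V)` acting irreducibly on `V`. Then `A`
is cyclic and `|A| ≤ |V| - 1`. -/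
theorem abelian_irreducible_is_cyclic
    (F : Type) [Field F] [Fintype F]
    (V : Type) [AddCommGroup V] [Module F V] [FiniteDimensional F V]
    (hn : 1 ≤ Module.finrank F V)
    (A : Subgroup (LinearMap.GeneralLinearGroup F V))
    (hab : ∀ a ∈ A, ∀ b ∈ A, a * b = b * a)
    (hirr : ∀ U : Submodule F V,
      (∀ a ∈ A, U.map ((a : LinearMap.GeneralLinearGroup F V) : V →ₗ[F] V) ≤ U) →
        U = ⊥ ∨ U = ⊤) :
    IsCyclic A ∧ Nat.card A ≤ Nat.card V - 1 := by
  have : Nontrivial V := Module.finrank_pos_iff.mp hn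
  have : Finite V := Module.finite_of_finite F
  have hA :
      Module.End.ActsIrreducibly (Units.val '' (A : Set (LinearMap.GeneralLinearGroup F V))) :=
    fun U hU => hirr U fun a ha => hU _ ⟨a, ha, rfl⟩
  obtain ⟨v, hv⟩ := exists_ne (0 : V)
  have : Finite A := Finite.of_injective _ (Subgroup.injective_apply_of_actsIrreducibly hab hA hv)
  exact ⟨Subgroup.isCyclic_of_actsIrreducibly hab hA,
    Subgroup.card_le_card_sub_one_of_actsIrreducibly hab hA⟩
end

section
/- There exists an absolute constant c₃ > 0 such that for every integer n ≥ 3 there exists a prime P with the following two properties: the product of all primes p′ ≤ P is greater than n⁴, and the sum of all primes p′ ≤ P is at most c₃ · (log₂ n)² / log₂ log₂ n. -/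
/-!
Let `L = log₂ n` and take `X ≍ L`. Chebyshev's lower bound `θ(X) ≫ X` makes the primorial
of `X` exceed `2^{4(⌊L⌋+1)} > n⁴`, while his upper bound `π(X) ≪ X / log X` bounds the sum of
the primes up to `X` by `X · π(X) ≪ L² / log L`. The prime `P` is the largest prime `≤ X`.
-/

open Filter Asymptotics Real

theorem exists_prime_primesLE_eq {X : ℕ} (hX : 2 ≤ X) :
    ∃ P, P.Prime ∧ Nat.primesLE P = Nat.primesLE X := by
  have hne : (Nat.primesLE X).Nonempty := ⟨2, Nat.mem_primesLE.2 ⟨hX, Nat.prime_two⟩⟩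
  set P := (Nat.primesLE X).max' hne
  have hP : P ≤ X ∧ P.Prime := Nat.mem_primesLE.1 ((Nat.primesLE X).max'_mem hne)
  refine ⟨P, hP.2, Finset.ext fun q => ?_⟩
  simp only [Nat.mem_primesLE]
  exact ⟨fun h => ⟨h.1.trans hP.1, h.2⟩,
    fun h => ⟨(Nat.primesLE X).le_max' q (Nat.mem_primesLE.2 h), h.2⟩⟩

theorem isLittleO_log_add_one_add_sqrt_mul_log :
    (fun x : ℝ => log (x + 1) + 2 * √x * log x) =o[atTop] id := by
  have hshift : (fun x : ℝ => x + 1) =O[atTop] id :=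
    IsBigO.of_bound 2 <| by
      filter_upwards [eventually_ge_atTop 1] with x hx
      simp only [norm_eq_abs, id, abs_of_nonneg (by linarith : (0:ℝ) ≤ x + 1),
        abs_of_nonneg (by linarith : (0:ℝ) ≤ x)]
      linarith
  have hlog : (fun x : ℝ => log (x + 1)) =o[atTop] id :=
    (isLittleO_log_id_atTop.comp_tendsto
      (tendsto_atTop_add_const_right _ 1 tendsto_id)).trans_isBigO hshift
  have hsqrt : (fun x : ℝ => 2 * √x * log x) =o[atTop] id := by
    refine ((isBigO_refl (fun x : ℝ => 2 * √x) atTop).mul_isLittleO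
      (isLittleO_log_rpow_atTop one_half_pos)).trans_isBigO (IsBigO.of_bound 2 ?_)
    filter_upwards [eventually_ge_atTop 0] with x hx
    rw [← sqrt_eq_rpow, mul_assoc, mul_self_sqrt hx]
    simp [abs_of_nonneg hx]
  exact hlog.add hsqrt

theorem eventually_two_pow_le_primorial_two_mul :
    ∀ᶠ m : ℕ in atTop, 2 ^ m ≤ primorial (2 * m) := by
  have hε : (0 : ℝ) < log 2 / 2 := by positivity
  have hsmall := (isLittleO_log_add_one_add_sqrt_mul_log.bound hε).natCast_atTop
  filter_upwards [(tendsto_id.const_mul_atTop' two_pos).eventually hsmall] with m hm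
  have htheta := Chebyshev.theta_ge (2 * m)
  rw [Chebyshev.theta_eq_log_primorial, Nat.floor_natCast] at htheta
  simp only [id, Nat.cast_mul, Nat.cast_ofNat, norm_eq_abs] at hm htheta
  rw [abs_of_nonneg (by positivity : (0:ℝ) ≤ 2 * m)] at hm
  have hlog : log ((2 : ℝ) ^ m) ≤ log (primorial (2 * m)) := by
    rw [Real.log_pow]
    linarith [le_abs_self (log (2 * m + 1) + 2 * √(2 * m) * log (2 * m))]
  exact_mod_cast (Real.log_le_log_iff (by positivity)
    (by exact_mod_cast primorial_pos _)).1 hlog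

theorem sum_primesLE_le_mul_primeCounting (X : ℕ) :
    ∑ p ∈ Nat.primesLE X, p ≤ X * Nat.primeCounting X := by
  rw [← Nat.primesLE_card_eq_primeCounting, mul_comm, ← smul_eq_mul]
  exact Finset.sum_le_card_nsmul _ _ _ fun p hp => Nat.le_of_mem_primesLE hp

theorem eventually_sum_primesLE_le :
    ∀ᶠ X : ℕ in atTop, (∑ p ∈ Nat.primesLE X, p : ℝ) ≤ (log 4 + 1) * X ^ 2 / log X := by
  filter_upwards [(Chebyshev.eventually_primeCounting_le one_pos).natCast_atTop] with X hX
  rw [Nat.floor_natCast] at hX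
  calc (∑ p ∈ Nat.primesLE X, p : ℝ) ≤ X * Nat.primeCounting X := by
        rw [← Nat.cast_sum, ← Nat.cast_mul]
        exact Nat.cast_le.2 (sum_primesLE_le_mul_primeCounting X)
    _ ≤ X * ((log 4 + 1) * X / log X) := by gcongr
    _ = (log 4 + 1) * X ^ 2 / log X := by ring

theorem sq_div_log_le_of_le_mul {L X a : ℝ} (hL : 1 < L) (hLX : L ≤ X) (hXa : X ≤ a * L) :
    X ^ 2 / log X ≤ a ^ 2 / log 2 * L ^ 2 / logb 2 L := by
  have hlogL : 0 < log L := log_pos hL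
  calc X ^ 2 / log X ≤ X ^ 2 / log L := by gcongr
    _ ≤ (a * L) ^ 2 / log L := by gcongr; linarith
    _ = a ^ 2 / log 2 * L ^ 2 / logb 2 L := by rw [logb]; field_simp

theorem logb_natCast_lt_natLog_add_one (b n : ℕ) : logb b n < Nat.log b n + 1 := by
  simpa only [natFloor_logb_natCast] using Nat.lt_floor_add_one (logb b n)

/-- There is an absolute constant `c₃ > 0` such that for every integer
`n ≥ 3` there is a prime `P` for which the product of all primes `p' ≤ P` exceeds `n⁴`,
while the sum of all primes `p' ≤ P` is at most `c₃ * (log₂ n)² / log₂ log₂ n`. -/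
theorem primes_product_sum_bound :
    ∃ c₃ : ℝ, 0 < c₃ ∧
      ∀ n : ℕ, 3 ≤ n →
        ∃ P : ℕ, P.Prime ∧
          n ^ 4 < ∏ p' ∈ (Finset.range (P + 1)).filter Nat.Prime, p' ∧
          ((∑ p' ∈ (Finset.range (P + 1)).filter Nat.Prime, p' : ℕ) : ℝ) ≤
            c₃ * (Real.logb 2 n) ^ 2 / Real.logb 2 (Real.logb 2 n) := by
  obtain ⟨N, hN⟩ := eventually_atTop.1 (eventually_two_pow_le_primorial_two_mul.and
    ((tendsto_id.const_mul_atTop' two_pos : Tendsto (2 * ·) atTop atTop).eventually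
      eventually_sum_primesLE_le))
  refine ⟨(log 4 + 1) * ((16 + 2 * N) ^ 2 / log 2), by positivity, fun n hn => ?_⟩
  set L := logb 2 n
  set k := Nat.log 2 n + 1
  obtain ⟨hprimorial, hsum⟩ := hN (4 * k + N) (by omega)
  obtain ⟨P, hP, hPX⟩ := exists_prime_primesLE_eq (X := 2 * (4 * k + N)) (by omega)
  have hL : 1 < L := (lt_logb_iff_rpow_lt one_lt_two (by positivity)).2 (by
    norm_num; exact_mod_cast hn)
  have hLk : L < k := by exact_mod_cast logb_natCast_lt_natLog_add_one 2 n
  have hkL : (k : ℝ) ≤ L + 1 := by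
    simpa [k] using add_le_add_right (natLog_le_logb n 2) 1
  refine ⟨P, hP, ?_, ?_⟩
  · change n ^ 4 < primorial P
    rw [primorial_eq_prod_primesLE, hPX, ← primorial_eq_prod_primesLE]
    calc n ^ 4 < (2 ^ k) ^ 4 :=
          Nat.pow_lt_pow_left (Nat.lt_pow_succ_log_self one_lt_two n) (by norm_num)
      _ ≤ 2 ^ (4 * k + N) := by rw [← pow_mul]; exact Nat.pow_le_pow_right two_pos (by omega)
      _ ≤ _ := hprimorial
  · change ((∑ p ∈ Nat.primesLE P, p : ℕ) : ℝ) ≤ _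
    have hX : ((2 * (4 * k + N) : ℕ) : ℝ) = 8 * k + 2 * N := by push_cast; ring
    rw [hPX, Nat.cast_sum]
    calc _ ≤ _ := hsum
      _ ≤ (log 4 + 1) * ((16 + 2 * N) ^ 2 / log 2 * L ^ 2 / logb 2 L) := by
          rw [mul_div_assoc]
          gcongr (log 4 + 1) * ?_
          apply sq_div_log_le_of_le_mul hL <;> rw [hX]
          · linarith
          · nlinarith [mul_le_mul_of_nonneg_left hL.le (N.cast_nonneg : (0:ℝ) ≤ N)]
      _ = _ := by ring
end

section
/- Let n ≥ 2 and let 1 ≤ s ≤ n be integers. Let p₁, …, p_r be distinct primes, each greater than 2, with p₁·p₂·⋯·p_r > n⁴. Let D be an r × s matrix with entries in {0, 1} such that for every column index j, the product over i of p_i^(D(i,j)) is at most s. Then there exists a row index i such that the number of j with D(i,j) = 1 is at most s/4. -/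
/-! If every row `i` had more than `s / 4` ones, then `4 cᵢ ≥ s + 1` for its row sum `cᵢ`.
Multiplying the column bounds gives `∏ pᵢ ^ cᵢ ≤ s ^ s`, hence
`(∏ pᵢ) ^ (s + 1) ≤ (∏ pᵢ ^ cᵢ) ^ 4 ≤ s ^ (4 s) ≤ (n ^ 4) ^ (s + 1)`,
contradicting `n ^ 4 < ∏ pᵢ`. -/

open Finset

theorem card_filter_eq_one_le_sum {ι : Type*} (s : Finset ι) (f : ι → ℕ) :
    #{j ∈ s | f j = 1} ≤ ∑ j ∈ s, f j := by
  rw [card_filter]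
  exact sum_le_sum fun j _ => by split_ifs with h <;> simp [h]

theorem prod_pow_sum_le_pow_card {ι κ M : Type*} [Fintype ι] [Fintype κ] [CommMonoid M]
    [Preorder M] [MulLeftMono M] (p : ι → M) (D : ι → κ → ℕ) {B : M}
    (hcol : ∀ j, ∏ i, p i ^ D i j ≤ B) :
    ∏ i, p i ^ ∑ j, D i j ≤ B ^ Fintype.card κ := by
  calc ∏ i, p i ^ ∑ j, D i j = ∏ j, ∏ i, p i ^ D i j := by
        simp_rw [← prod_pow_eq_pow_sum]
        exact prod_comm
    _ ≤ B ^ Fintype.card κ := prod_le_pow_card _ _ _ fun j _ => hcol j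

theorem prod_pow_le_prod_pow {ι M : Type*} [CommMonoid M] [PartialOrder M] [IsOrderedMonoid M]
    (s : Finset ι) (p : ι → M) (hp : ∀ i ∈ s, 1 ≤ p i) {a : ℕ} (e : ι → ℕ)
    (he : ∀ i ∈ s, a ≤ e i) :
    (∏ i ∈ s, p i) ^ a ≤ ∏ i ∈ s, p i ^ e i := by
  rw [← prod_pow]
  exact prod_le_prod' fun i hi => pow_le_pow_right' (hp i hi) (he i hi)

theorem exists_sparse_row_general
    (n s r : ℕ) (hs1 : 1 ≤ s) (hsn : s ≤ n)
    (p : Fin r → ℕ)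
    (hprod : n ^ 4 < ∏ i, p i)
    (D : Fin r → Fin s → ℕ)
    (hcol : ∀ j, ∏ i, p i ^ D i j ≤ s) :
    ∃ i : Fin r,
      ((Finset.univ.filter fun j : Fin s => D i j = 1).card : ℝ) ≤ (s : ℝ) / 4 := by
  by_contra! hdense
  have hrow : ∀ i, s + 1 ≤ 4 * ∑ j, D i j := fun i => by
    have hcard : s < 4 * #{j | D i j = 1} := by
      have := hdense i
      exact_mod_cast (by linarith : (s : ℝ) < 4 * #{j | D i j = 1})
    have := card_filter_eq_one_le_sum univ (D i)
    omega
  have hp : ∀ i ∈ univ, 1 ≤ p i := fun i hi =>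
    Nat.one_le_iff_ne_zero.2 (prod_ne_zero_iff.1 (by omega) i hi)
  have hupper : (∏ i, p i) ^ (s + 1) ≤ (n ^ 4) ^ (s + 1) :=
    calc (∏ i, p i) ^ (s + 1) ≤ ∏ i, p i ^ (4 * ∑ j, D i j) :=
          prod_pow_le_prod_pow _ p hp _ fun i _ => hrow i
      _ = (∏ i, p i ^ ∑ j, D i j) ^ 4 := by simp_rw [mul_comm 4, pow_mul, prod_pow]
      _ ≤ (s ^ s) ^ 4 := by
          gcongr
          simpa using prod_pow_sum_le_pow_card p D hcol
      _ ≤ (n ^ s) ^ 4 := by gcongr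
      _ ≤ (n ^ 4) ^ (s + 1) := by
          rw [← pow_mul, ← pow_mul]
          exact Nat.pow_le_pow_right (by omega) (by omega)
  exact absurd hupper (not_le.2 (Nat.pow_lt_pow_left hprod (by omega)))

/-- Let `n ≥ 2`, `1 ≤ s ≤ n`, and let `p 0, …, p (r-1)` be distinct primes,
each greater than `2`, with product exceeding `n⁴`. Let `D` be an `r × s` zero-one matrix
such that for each column `j` the product `∏ i, (p i) ^ (D i j)` is at most `s`. Then some
row `i` contains at most `s / 4` ones. -/
theorem exists_sparse_row
    (n s r : ℕ) (hn : 2 ≤ n) (hs1 : 1 ≤ s) (hsn : s ≤ n)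
    (p : Fin r → ℕ)
    (hprime : ∀ i, (p i).Prime)
    (hgt2 : ∀ i, 2 < p i)
    (hdistinct : Function.Injective p)
    (hprod : n ^ 4 < ∏ i, p i)
    (D : Fin r → Fin s → ℕ)
    (hD01 : ∀ i j, D i j = 0 ∨ D i j = 1)
    (hcol : ∀ j, ∏ i, p i ^ D i j ≤ s) :
    ∃ i : Fin r,
      ((Finset.univ.filter fun j : Fin s => D i j = 1).card : ℝ) ≤ (s : ℝ) / 4 :=
  exists_sparse_row_general n s r hs1 hsn p hprod D hcol
end

section
/- Let p be a prime, q = p^f a power of p, and W a finite-dimensional vector space over F_q. Let P be a subgroup of the group of F_q-linear automorphisms of W that acts irreducibly on W over F_q and primitively over F_q, and let Z be the group of scalar multiplications by elements of F_q^* (so Z ≅ F_q^*, centralized by P). Regard W as a vector space over the prime field F_p and regard the elements of P and Z as F_p-linear automorphisms of W. Then the group G generated by P and Z acts irreducibly on W over F_p and primitively over F_p. Here a subgroup G of K-linear automorphisms of a K-vector space W acts primitively over K if it acts irreducibly over K and there is no decomposition W = W₁ ⊕ ⋯ ⊕ W_t into t ≥ 2 nonzero K-subspaces such that every element of G permutes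 the set {W₁, …, W_t}. -/
/-
A `G`-invariant `F_p`-subspace is stable under the scalars `Z`, hence an `F_q`-subspace, and it
is `P`-invariant. The same holds for the summands of a `G`-stable decomposition
`W = W₁ ⊕ ⋯ ⊕ W_t`, but here stability under `Z` needs an argument, since `Z` only permutes the
summands: if `c ∉ {0, -1}` maps `W_i` onto `W_j` and `1 + c` maps `W_i` onto `W_k`, then for
`x ∈ W_i` we have `x + c • x ∈ W_k`, and independence of the summands forces `j = i`, or `k = i`
(so `c • x = (1 + c) • x - x ∈ W_i`), or `x = 0`. The `F_q`-irreducibility and primitivity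
of `P` then apply to these `F_q`-subspaces.
-/

/-- A subgroup `G` of `K`-linear automorphisms of a `K`-vector space `W` acts irreducibly
over `K` if the only `K`-subspaces `U` of `W` with `g (U) ⊆ U` for all `g ∈ G` are `0` and
`W`. -/
def ActsIrreducibly (K W : Type*) [Field K] [AddCommGroup W] [Module K W]
    (G : Subgroup (W ≃ₗ[K] W)) : Prop :=
  ∀ U : Submodule K W, (∀ g ∈ G, U.map (g : W →ₗ[K] W) ≤ U) → U = ⊥ ∨ U = ⊤

/-- A subgroup `G` of `K`-linear automorphisms of `W` preserves a nontrivial decomposition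
if `W = W₁ ⊕ ⋯ ⊕ W_t` for some `t ≥ 2` nonzero `K`-subspaces that are permuted by every
element of `G`. -/
def PreservesDecomposition (K W : Type*) [Field K] [AddCommGroup W] [Module K W]
    (G : Subgroup (W ≃ₗ[K] W)) : Prop :=
  ∃ (t : ℕ) (Wi : Fin t → Submodule K W),
    2 ≤ t ∧ (∀ i, Wi i ≠ ⊥) ∧ DirectSum.IsInternal Wi ∧
      ∀ g ∈ G, ∀ i, ∃ j, (Wi i).map (g : W →ₗ[K] W) = Wi j

/-- A subgroup `G` of `K`-linear automorphisms of `W` acts primitively over `K` if it acts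
irreducibly over `K` and preserves no nontrivial decomposition of `W`. -/
def ActsPrimitively (K W : Type*) [Field K] [AddCommGroup W] [Module K W]
    (G : Subgroup (W ≃ₗ[K] W)) : Prop :=
  ActsIrreducibly K W G ∧ ¬ PreservesDecomposition K W G

theorem smul_mem_of_iSupIndep {K F W ι : Type*} [Ring K] [Ring F] [AddCommGroup W] [Module K W]
    [Module F W] {Wi : ι → Submodule K W} (hind : iSupIndep Wi)
    (hperm : ∀ c : F, c ≠ 0 → ∀ i, ∃ j, ∀ x ∈ Wi i, c • x ∈ Wi j)
    (c : F) {i : ι} {x : W} (hx : x ∈ Wi i) : c • x ∈ Wi i := by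
  rcases eq_or_ne c 0 with rfl | hc
  · simp
  rcases eq_or_ne (1 + c) 0 with hc1 | hc1
  · rw [eq_neg_of_add_eq_zero_right hc1, neg_one_smul]
    exact neg_mem hx
  obtain ⟨j, hj⟩ := hperm c hc i
  obtain ⟨k, hk⟩ := hperm (1 + c) hc1 i
  have hcx := hj x hx
  have hcx1 := hk x hx
  rw [add_smul, one_smul] at hcx1
  by_cases hji : j = i
  · exact hji ▸ hcx
  by_cases hki : k = i
  · subst hki
    simpa using sub_mem hcx1 hx
  have hx0 : x = 0 := by
    have hsum : ∀ {l y}, l ≠ i → y ∈ Wi l → y ∈ ⨆ (m) (_ : m ≠ i), Wi m := fun hl hy =>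
      le_iSup₂ (f := fun m (_ : m ≠ i) => Wi m) _ hl hy
    refine Submodule.disjoint_def.mp (hind i) x hx ?_
    simpa using sub_mem (hsum hki hcx1) (hsum hji hcx)
  simp [hx0]

def Submodule.extendScalarsOfSMulMem {K F W : Type*} [Semiring K] [Semiring F] [AddCommMonoid W]
    [Module K W] [Module F W] (N : Submodule K W) (h : ∀ (c : F) {x : W}, x ∈ N → c • x ∈ N) :
    Submodule F W where
  toAddSubmonoid := N.toAddSubmonoid
  smul_mem' c _ hx := h c hx

theorem smul_mem_of_forall_map_le {K F W : Type*} [Semiring K] [Semiring F] [AddCommGroup W]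
    [Module K W] [Module F W] {G : Subgroup (W ≃ₗ[K] W)}
    (hZG : ∀ c : F, c ≠ 0 → ∃ e ∈ G, ∀ x, e x = c • x)
    {U : Submodule K W} (hU : ∀ g ∈ G, U.map (g : W →ₗ[K] W) ≤ U) (c : F) {x : W} (hx : x ∈ U) :
    c • x ∈ U := by
  rcases eq_or_ne c 0 with rfl | hc
  · simp
  obtain ⟨e, he, hex⟩ := hZG c hc
  rw [← hex]
  exact hU e he (Submodule.mem_map_of_mem hx)

section RestrictScalars

variable {K F W : Type*} [Field K] [Field F] [Algebra K F] [AddCommGroup W] [Module K W]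
  [Module F W] [IsScalarTower K F W] {P : Subgroup (W ≃ₗ[F] W)} {G : Subgroup (W ≃ₗ[K] W)}

theorem ActsIrreducibly.restrictScalars (hP : ActsIrreducibly F W P)
    (hPG : ∀ g ∈ P, g.restrictScalars K ∈ G)
    (hZG : ∀ c : F, c ≠ 0 → ∃ e ∈ G, ∀ x, e x = c • x) : ActsIrreducibly K W G := by
  intro U hU
  let V := U.extendScalarsOfSMulMem (smul_mem_of_forall_map_le hZG hU)
  have hV : ∀ g ∈ P, V.map (g : W →ₗ[F] W) ≤ V := fun g hg => by
    rw [← Submodule.restrictScalars_le K, Submodule.restrictScalars_map]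
    exact hU _ (hPG g hg)
  exact (hP V hV).imp (Submodule.restrictScalars_eq_bot_iff K F W).mpr
    (Submodule.restrictScalars_eq_top_iff K F W).mpr

theorem not_preservesDecomposition_restrictScalars (hP : ¬ PreservesDecomposition F W P)
    (hPG : ∀ g ∈ P, g.restrictScalars K ∈ G)
    (hZG : ∀ c : F, c ≠ 0 → ∃ e ∈ G, ∀ x, e x = c • x) : ¬ PreservesDecomposition K W G := by
  rintro ⟨t, Wi, ht, hbot, hint, hperm⟩
  have hsmul (c : F) (i : Fin t) {x : W} (hx : x ∈ Wi i) : c • x ∈ Wi i := by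
    refine smul_mem_of_iSupIndep hint.submodule_iSupIndep (fun c hc i => ?_) c hx
    obtain ⟨e, he, hex⟩ := hZG c hc
    obtain ⟨j, hj⟩ := hperm e he i
    exact ⟨j, fun x hx => hex x ▸ hj ▸ Submodule.mem_map_of_mem hx⟩
  let Vi i := (Wi i).extendScalarsOfSMulMem (hsmul · i)
  -- `Vi i` has the same carrier as `Wi i` definitionally, so `hint` is also internality of `Vi`.
  refine hP ⟨t, Vi, ht, fun i h => hbot i ((Submodule.restrictScalars_eq_bot_iff K F W).mpr h),
    hint, fun g hg i => ?_⟩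
  obtain ⟨j, hj⟩ := hperm _ (hPG g hg) i
  exact ⟨j, Submodule.restrictScalars_injective K _ _ hj⟩

end RestrictScalars

theorem primitive_over_prime_field_general
    (p : ℕ) [Fact p.Prime]
    (F : Type) [Field F] [Algebra (ZMod p) F]
    (W : Type) [AddCommGroup W] [Module F W] [Module (ZMod p) W]
    [IsScalarTower (ZMod p) F W]
    (P : Subgroup (W ≃ₗ[F] W))
    (hP : ActsPrimitively F W P)
    (G : Subgroup (W ≃ₗ[ZMod p] W))
    (hG : G = Subgroup.closure
      ({e : W ≃ₗ[ZMod p] W | ∃ g ∈ P, ∀ x : W, e x = g x} ∪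
       {e : W ≃ₗ[ZMod p] W | ∃ c : F, c ≠ 0 ∧ ∀ x : W, e x = c • x})) :
    ActsPrimitively (ZMod p) W G := by
  have hPG (g) (hg : g ∈ P) : g.restrictScalars (ZMod p) ∈ G :=
    hG ▸ Subgroup.subset_closure (Or.inl ⟨g, hg, fun _ => rfl⟩)
  have hZG (c : F) (hc : c ≠ 0) : ∃ e ∈ G, ∀ x, e x = c • x :=
    ⟨DistribMulAction.toLinearEquiv (ZMod p) W (Units.mk0 c hc),
      hG ▸ Subgroup.subset_closure (Or.inr ⟨c, hc, fun _ => rfl⟩), fun _ => rfl⟩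
  exact ⟨hP.1.restrictScalars hPG hZG, not_preservesDecomposition_restrictScalars hP.2 hPG hZG⟩

/-- **Liebeck–Shalev claim.** Let `F` be a finite field of characteristic `p`
(so `|F| = q = p^f`) and `W` a finite-dimensional `F`-vector space, also regarded as a
vector space over the prime field `ZMod p`. Let `P` be a subgroup of the `F`-linear
automorphisms of `W` acting irreducibly and primitively over `F`. Let `G` be the subgroup
of `ZMod p`-linear automorphisms of `W` generated by (the scalar restrictions of) the
elements of `P` together with the scalar multiplications by nonzero elements of `F`
(a cyclic group `Z ≅ Fˣ` centralised by `P`). Then `G` acts irreducibly and primitively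
on `W` over the prime field `ZMod p`. -/
theorem primitive_over_prime_field
    (p : ℕ) [Fact p.Prime]
    (F : Type) [Field F] [Fintype F] [CharP F p] [Algebra (ZMod p) F]
    (W : Type) [AddCommGroup W] [Module F W] [Module (ZMod p) W]
    [IsScalarTower (ZMod p) F W] [FiniteDimensional F W]
    (P : Subgroup (W ≃ₗ[F] W))
    (hP : ActsPrimitively F W P)
    (G : Subgroup (W ≃ₗ[ZMod p] W))
    (hG : G = Subgroup.closure
      ({e : W ≃ₗ[ZMod p] W | ∃ g ∈ P, ∀ x : W, e x = g x} ∪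
       {e : W ≃ₗ[ZMod p] W | ∃ c : F, c ≠ 0 ∧ ∀ x : W, e x = c • x})) :
    ActsPrimitively (ZMod p) W G :=
  primitive_over_prime_field_general p F W P hP G hG
end
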